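/- arXiv:1103.4994 — 6 statements merged into one kernel-verified Lean document; each statement's English description precedes it below -/
import Mathlib

section
/- Every connected finite simple graph whose number of edges is even and positive is strongly edge-balanced. -/
open SimpleGraph

/-- The number of edges labeled `i` by the edge labeling `f`. -/
noncomputable def edgeCount {V : Type*} (G : SimpleGraph V) (f : G.edgeSet → ZMod 2) (i : ZMod 2) : ℕ :=
  Nat.card {e : G.edgeSet // f e = i}

/-- The number of edges incident to `v` that are labeled `i` (the `i`-degree of `v`). -/
noncomputable def labDeg {V : Type*} (G : SimpleGraph V) (f : G.edgeSet → ZMod 2) (i : ZMod 2) (v : V) : ℕ :=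
  Nat.card {e : G.edgeSet // f e = i ∧ v ∈ (e : Sym2 V)}

/-- The number of vertices whose induced (partial) label is `i`: those incident to strictly
more `i`-edges than `(1-i)`-edges. -/
noncomputable def vertexCount {V : Type*} (G : SimpleGraph V) (f : G.edgeSet → ZMod 2) (i : ZMod 2) : ℕ :=
  Nat.card {v : V // labDeg G f (1 - i) v < labDeg G f i v}

/-- An edge labeling (a surjective function onto `ZMod 2`) is edge-friendly if
`|e_f(0) - e_f(1)| ≤ 1`. -/
def EdgeFriendly {V : Type*} (G : SimpleGraph V) (f : G.edgeSet → ZMod 2) : Prop :=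
  Function.Surjective f ∧ |(edgeCount G f 0 : ℤ) - (edgeCount G f 1 : ℤ)| ≤ 1

/-- A graph is strongly edge-balanced if some edge-friendly labeling `f` satisfies
`v_f(0) = v_f(1)` and `e_f(0) = e_f(1)`. -/
def StronglyEdgeBalanced {V : Type*} (G : SimpleGraph V) : Prop :=
  ∃ f : G.edgeSet → ZMod 2, EdgeFriendly G f ∧
    vertexCount G f 0 = vertexCount G f 1 ∧ edgeCount G f 0 = edgeCount G f 1

/-!
By Kotzig's theorem, a connected graph with an even number of edges splits into cherries (paths
with two edges): delete an edge `uw`; the remaining edges fall into those reachable from `u` and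
those hanging off `w`, each part is decomposable by induction after setting aside, when its size
is odd, one edge at `u` resp. `w`, and the set-aside edges are paired with `uw`.

Label the first edge of every cherry `0` and the second `1`. Both labels are used equally often,
and at each vertex the number of `0`-edges minus the number of `1`-edges is the net out-degree in
the multigraph joining the two ends of every cherry, oriented from first to last vertex.
Reversing cherries reorients this multigraph, and every multigraph has an orientation with all net
out-degrees in `{-1, 0, 1}`: split off two edges `va`, `vb` into one edge `ab` until no two edges
meet. Finally, the differences sum to `2 (e₀ - e₁) = 0` over all vertices, so as many vertices
have difference `1` as `-1`.
-/

open Multiset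

structure Cherry (V : Type*) where
  left : V
  center : V
  right : V

section

variable {V : Type*}

namespace Cherry

variable (c : Cherry V)

def leftEdge : Sym2 V := s(c.left, c.center)

def rightEdge : Sym2 V := s(c.center, c.right)

def ends : V × V := (c.left, c.right)

def reverse : Cherry V := ⟨c.right, c.center, c.left⟩

@[simp] lemma leftEdge_reverse : c.reverse.leftEdge = c.rightEdge := Sym2.eq_swap

@[simp] lemma rightEdge_reverse : c.reverse.rightEdge = c.leftEdge := Sym2.eq_swap

@[simp] lemma ends_reverse : c.reverse.ends = c.ends.swap := rfl

end Cherry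

def IsCherryDecomposition (P : Multiset (Cherry V)) (S : Multiset (Sym2 V)) : Prop :=
  P.map Cherry.leftEdge + P.map Cherry.rightEdge = S

namespace IsCherryDecomposition

variable {P Q : Multiset (Cherry V)} {S T : Multiset (Sym2 V)}

lemma zero : IsCherryDecomposition (0 : Multiset (Cherry V)) 0 := rfl

lemma add (hP : IsCherryDecomposition P S) (hQ : IsCherryDecomposition Q T) :
    IsCherryDecomposition (P + Q) (S + T) := by
  rw [← hP, ← hQ, IsCherryDecomposition, map_add, map_add, add_add_add_comm]

lemma cons (c : Cherry V) (hP : IsCherryDecomposition P S) :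
    IsCherryDecomposition (c ::ₘ P) (c.leftEdge ::ₘ c.rightEdge ::ₘ S) := by
  rw [← hP, IsCherryDecomposition, map_cons, map_cons, cons_add, add_cons]

end IsCherryDecomposition

def EdgeReachable (M : Multiset (Sym2 V)) : V → V → Prop :=
  Relation.ReflTransGen fun x y => s(x, y) ∈ M

def IsRootedAt (M : Multiset (Sym2 V)) (u : V) : Prop :=
  ∀ e ∈ M, ∃ x ∈ e, EdgeReachable M u x

namespace EdgeReachable

variable {M : Multiset (Sym2 V)} {u w x : V}

lemma of_cons (h : EdgeReachable (s(u, w) ::ₘ M) u x) :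
    EdgeReachable M u x ∨ EdgeReachable M w x := by
  induction h with
  | refl => exact .inl .refl
  | @tail y z _ hyz ih =>
    rcases mem_cons.mp hyz with hyz | hyz
    · rcases Sym2.eq_iff.mp hyz with ⟨-, rfl⟩ | ⟨-, rfl⟩
      exacts [.inr .refl, .inl .refl]
    · exact ih.imp (·.tail hyz) (·.tail hyz)

end EdgeReachable

namespace IsRootedAt

variable {M : Multiset (Sym2 V)} {u w : V}

lemma exists_eq_cons (hM : IsRootedAt M u) (hne : M ≠ 0) : ∃ w R, M = s(u, w) ::ₘ R := by
  suffices ∃ w, s(u, w) ∈ M from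
    let ⟨w, hw⟩ := this; ⟨w, exists_cons_of_mem hw⟩
  obtain ⟨e, he⟩ := exists_mem_of_ne_zero hne
  obtain ⟨x, hx, hux⟩ := hM e he
  rcases hux.cases_head with rfl | ⟨y, huy, -⟩
  · obtain ⟨y, rfl⟩ := Sym2.mem_iff_exists.mp hx
    exact ⟨y, he⟩
  · exact ⟨y, huy⟩

lemma exists_split (hM : IsRootedAt (s(u, w) ::ₘ M) u) :
    ∃ A B, IsRootedAt A u ∧ IsRootedAt B w ∧ M = A + B := by
  classical
  set near : Sym2 V → Prop := fun e => ∃ x ∈ e, EdgeReachable M u x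
  refine ⟨M.filter near, M.filter (¬ near ·), ?_, ?_, (filter_add_not _ _).symm⟩
  · have reach_near {x} (h : EdgeReachable M u x) : EdgeReachable (M.filter near) u x := by
      induction h with
      | refl => exact .refl
      | tail huy hyz ih => exact ih.tail (mem_filter.mpr ⟨hyz, _, Sym2.mem_mk_left _ _, huy⟩)
    intro e he
    obtain ⟨-, x, hx, hux⟩ := mem_filter.mp he
    exact ⟨x, hx, reach_near hux⟩
  · -- a path ending outside the reach of `u` stays outside it
    have reach_far {y x} (h : EdgeReachable M y x) (hux : ¬ EdgeReachable M u x) :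
        EdgeReachable (M.filter (¬ near ·)) y x := by
      induction h using Relation.ReflTransGen.head_induction_on with
      | refl => exact .refl
      | head hyz hzx ih =>
        refine .head (mem_filter.mpr ⟨hyz, ?_⟩) ih
        rintro ⟨t, ht, hut⟩
        rcases Sym2.mem_iff.mp ht with rfl | rfl
        · exact hux ((hut.tail hyz).trans hzx)
        · exact hux (hut.trans hzx)
    intro e he
    obtain ⟨heM, hfar⟩ := mem_filter.mp he
    obtain ⟨x, hx, hux⟩ := hM e (mem_cons_of_mem heM)
    have hfar' : ¬ EdgeReachable M u x := fun h => hfar ⟨x, hx, h⟩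
    exact ⟨x, hx, reach_far (hux.of_cons.resolve_left hfar') hfar'⟩

end IsRootedAt

theorem exists_cherryDecomposition {M : Multiset (Sym2 V)} {u : V} (hM : IsRootedAt M u) :
    (Even (card M) → ∃ P, IsCherryDecomposition P M) ∧
    (Odd (card M) → ∃ x R, M = s(u, x) ::ₘ R ∧ ∃ P, IsCherryDecomposition P R) := by
  rcases eq_or_ne M 0 with rfl | hne
  · exact ⟨fun _ => ⟨0, .zero⟩, fun h => absurd h (by simp)⟩
  obtain ⟨w, R, rfl⟩ := hM.exists_eq_cons hne
  obtain ⟨A, B, hA, hB, rfl⟩ := hM.exists_split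
  have ihA := exists_cherryDecomposition hA
  have ihB := exists_cherryDecomposition hB
  simp only [card_cons, card_add, Nat.even_add_one, Nat.odd_add_one, Nat.even_add,
    ← Nat.not_even_iff_odd] at ihA ihB ⊢
  refine ⟨fun hAB => ?_, fun hAB => ?_⟩
  · by_cases hAe : Even (card A)
    · obtain ⟨PA, hPA⟩ := ihA.1 hAe
      obtain ⟨x, RB, rfl, PB, hPB⟩ := ihB.2 (by tauto)
      refine ⟨⟨u, w, x⟩ ::ₘ (PA + PB), ?_⟩
      rw [add_cons]
      exact (hPA.add hPB).cons ⟨u, w, x⟩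
    · obtain ⟨x, RA, rfl, PA, hPA⟩ := ihA.2 hAe
      obtain ⟨PB, hPB⟩ := ihB.1 (by tauto)
      refine ⟨⟨w, u, x⟩ ::ₘ (PA + PB), ?_⟩
      rw [cons_add, Sym2.eq_swap]
      exact (hPA.add hPB).cons ⟨w, u, x⟩
  · by_cases hAe : Even (card A)
    · obtain ⟨PA, hPA⟩ := ihA.1 hAe
      obtain ⟨PB, hPB⟩ := ihB.1 (by tauto)
      exact ⟨w, A + B, rfl, PA + PB, hPA.add hPB⟩
    · obtain ⟨x, RA, rfl, PA, hPA⟩ := ihA.2 hAe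
      obtain ⟨y, RB, rfl, PB, hPB⟩ := ihB.2 (by tauto)
      refine ⟨x, s(u, w) ::ₘ s(w, y) ::ₘ (RA + RB), ?_, ⟨u, w, y⟩ ::ₘ (PA + PB),
        (hPA.add hPB).cons ⟨u, w, y⟩⟩
      rw [cons_add, add_cons, cons_swap]
termination_by card M
decreasing_by all_goals subst_vars; simp only [card_cons, card_add]; omega

section Orientation

variable [DecidableEq V]

def netOutDegree (N : Multiset (V × V)) (v : V) : ℤ :=
  N.countP (·.1 = v) - N.countP (·.2 = v)

lemma netOutDegree_cons (p : V × V) (N : Multiset (V × V)) (v : V) :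
    netOutDegree (p ::ₘ N) v =
      netOutDegree N v + ((if p.1 = v then 1 else 0) - if p.2 = v then 1 else 0) := by
  simp only [netOutDegree, countP_cons]
  push_cast
  ring

lemma abs_netOutDegree_le (N : Multiset (V × V)) (v : V) :
    |netOutDegree N v| ≤ N.countP fun p => v ∈ s(p.1, p.2) := by
  induction N using Multiset.induction_on with
  | empty => simp [netOutDegree]
  | cons p N ih =>
    rw [netOutDegree_cons, countP_cons, abs_le] at *
    split_ifs with h <;> simp only [Sym2.mem_iff] at h <;> grind

lemma exists_orientation_cons_cons {N' : Multiset (V × V)} {R : Multiset (Sym2 V)} {v a b : V}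
    (h : N'.map (fun p => s(p.1, p.2)) = s(a, b) ::ₘ R) :
    ∃ N : Multiset (V × V), N.map (fun p => s(p.1, p.2)) = s(v, a) ::ₘ s(v, b) ::ₘ R ∧
      netOutDegree N = netOutDegree N' := by
  obtain ⟨r, hr, hrab⟩ := mem_map.mp (h ▸ mem_cons_self _ _)
  obtain ⟨N, rfl⟩ := exists_cons_of_mem hr
  rw [map_cons, hrab, cons_inj_right] at h
  -- the arc `r` from `a` to `b` (or back) becomes the path `r.1 → v → r.2`
  refine ⟨(r.1, v) ::ₘ (v, r.2) ::ₘ N, ?_, ?_⟩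
  · rcases Sym2.eq_iff.mp hrab with ⟨rfl, rfl⟩ | ⟨rfl, rfl⟩
    · simp [h, Sym2.eq_swap]
    · simp [h, Sym2.eq_swap, cons_swap]
  · funext x
    simp only [netOutDegree_cons]
    ring

lemma exists_eq_cons_cons_of_two_le_countP {M : Multiset (Sym2 V)} {v : V}
    (h : 2 ≤ M.countP (v ∈ ·)) : ∃ a b R, M = s(v, a) ::ₘ s(v, b) ::ₘ R := by
  obtain ⟨e₁, he₁, hv₁⟩ := countP_pos.mp (by omega : 0 < M.countP (v ∈ ·))
  obtain ⟨M₁, rfl⟩ := exists_cons_of_mem he₁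
  rw [countP_cons_of_pos (p := (v ∈ ·)) _ hv₁] at h
  obtain ⟨e₂, he₂, hv₂⟩ := countP_pos.mp (by omega : 0 < M₁.countP (v ∈ ·))
  obtain ⟨R, rfl⟩ := exists_cons_of_mem he₂
  obtain ⟨a, rfl⟩ := Sym2.mem_iff_exists.mp hv₁
  obtain ⟨b, rfl⟩ := Sym2.mem_iff_exists.mp hv₂
  exact ⟨a, b, R, rfl⟩

theorem exists_orientation_abs_netOutDegree_le_one (M : Multiset (Sym2 V)) :
    ∃ N : Multiset (V × V), N.map (fun p => s(p.1, p.2)) = M ∧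
      ∀ v, |netOutDegree N v| ≤ 1 := by
  by_cases h : ∃ v, 2 ≤ M.countP (v ∈ ·)
  · obtain ⟨v, hv⟩ := h
    obtain ⟨a, b, R, rfl⟩ := exists_eq_cons_cons_of_two_le_countP hv
    obtain ⟨N', hN', hbal⟩ := exists_orientation_abs_netOutDegree_le_one (s(a, b) ::ₘ R)
    obtain ⟨N, hN, hdeg⟩ := exists_orientation_cons_cons (v := v) hN'
    exact ⟨N, hN, hdeg ▸ hbal⟩
  · push Not at h
    obtain ⟨N, hN⟩ := map_surjective_of_surjective Sym2.mk_surjective M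
    refine ⟨N, hN, fun v => (abs_netOutDegree_le N v).trans ?_⟩
    have hv : N.countP (fun p => v ∈ s(p.1, p.2)) = M.countP (v ∈ ·) := by
      rw [← hN, countP_map, countP_eq_card_filter]
      rfl
    exact_mod_cast hv ▸ Nat.le_of_lt_succ (h v)
termination_by card M
decreasing_by subst_vars; simp

end Orientation

namespace IsCherryDecomposition

variable {P : Multiset (Cherry V)} {S : Multiset (Sym2 V)}

lemma exists_map_ends_eq {N : Multiset (V × V)} (hP : IsCherryDecomposition P S)
    (hN : N.map (fun p => s(p.1, p.2)) = P.map fun c => s(c.left, c.right)) :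
    ∃ Q, IsCherryDecomposition Q S ∧ Q.map Cherry.ends = N := by
  induction P using Multiset.induction_on generalizing N S with
  | empty =>
    rw [map_zero, map_eq_zero] at hN
    exact ⟨0, hP, hN.symm⟩
  | cons c P ih =>
    obtain ⟨n, hn, hnc⟩ := mem_map.mp (hN ▸ mem_map_of_mem _ (mem_cons_self c P))
    obtain ⟨N, rfl⟩ := exists_cons_of_mem hn
    rw [map_cons, map_cons, hnc, cons_inj_right] at hN
    obtain ⟨Q, hQ, rfl⟩ := ih rfl hN
    obtain rfl : S =
        c.leftEdge ::ₘ c.rightEdge ::ₘ (P.map Cherry.leftEdge + P.map Cherry.rightEdge) :=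
      (Eq.symm hP).trans (IsCherryDecomposition.cons c rfl)
    rcases (Sym2.mk_eq_mk_iff (p := n) (q := c.ends)).mp hnc with rfl | rfl
    · exact ⟨c ::ₘ Q, hQ.cons c, map_cons _ _ _⟩
    · refine ⟨c.reverse ::ₘ Q, ?_, by rw [map_cons, Cherry.ends_reverse]⟩
      simpa [cons_swap] using hQ.cons c.reverse

theorem exists_abs_netOutDegree_le_one [DecidableEq V] (hP : IsCherryDecomposition P S) :
    ∃ Q, IsCherryDecomposition Q S ∧ ∀ v, |netOutDegree (Q.map Cherry.ends) v| ≤ 1 := by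
  obtain ⟨N, hN, hbal⟩ :=
    exists_orientation_abs_netOutDegree_le_one (P.map fun c => s(c.left, c.right))
  obtain ⟨Q, hQ, rfl⟩ := hP.exists_map_ends_eq hN
  exact ⟨Q, hQ, hbal⟩

end IsCherryDecomposition

section Labeling

variable {G : SimpleGraph V}

lemma sum_labDeg [Fintype V] (f : G.edgeSet → ZMod 2) (i : ZMod 2) :
    ∑ v, labDeg G f i v = 2 * edgeCount G f i := by
  classical
  simp only [labDeg, edgeCount, Nat.card_eq_fintype_card, Fintype.card_subtype, Finset.card_filter]
  rw [Finset.sum_comm, Finset.mul_sum]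
  refine Finset.sum_congr rfl fun e _ => ?_
  split_ifs with h
  · simp only [h, true_and, ← Finset.card_filter]
    rw [← Sym2.card_toFinset_of_not_isDiag _ (G.not_isDiag_of_mem_edgeSet e.2), mul_one]
    congr 1
    ext v
    simp
  · simp [h]

theorem vertexCount_eq_of_abs_labDeg_sub_le_one [Fintype V] {f : G.edgeSet → ZMod 2}
    (he : edgeCount G f 0 = edgeCount G f 1)
    (hv : ∀ v, |(labDeg G f 0 v : ℤ) - labDeg G f 1 v| ≤ 1) :
    vertexCount G f 0 = vertexCount G f 1 := by
  classical
  have hsum : ∑ v, ((labDeg G f 0 v : ℤ) - labDeg G f 1 v) = 0 := by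
    rw [Finset.sum_sub_distrib, sub_eq_zero]
    exact_mod_cast (sum_labDeg f 0).trans (he ▸ (sum_labDeg f 1).symm)
  have hsign (v : V) : (labDeg G f 0 v : ℤ) - labDeg G f 1 v =
      (if labDeg G f 1 v < labDeg G f 0 v then 1 else 0) -
        if labDeg G f 0 v < labDeg G f 1 v then 1 else 0 := by
    have := abs_le.mp (hv v)
    split_ifs <;> omega
  simp only [hsign, Finset.sum_sub_distrib, Finset.sum_boole] at hsum
  simp only [vertexCount, sub_zero, sub_self, Nat.card_eq_fintype_card, Fintype.card_subtype]
  omega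

lemma surjective_of_edgeCount_eq {f : G.edgeSet → ZMod 2}
    (h : edgeCount G f 0 = edgeCount G f 1) (hpos : 0 < Nat.card G.edgeSet) :
    Function.Surjective f := by
  obtain ⟨⟨e⟩, _⟩ := Nat.card_pos_iff.mp hpos
  have hcount (i : ZMod 2) : edgeCount G f i = edgeCount G f 0 := by
    fin_cases i
    exacts [rfl, h.symm]
  intro i
  have hi : 0 < edgeCount G f i :=
    hcount i ▸ hcount (f e) ▸ Nat.card_pos_iff.mpr ⟨⟨⟨e, rfl⟩⟩, inferInstance⟩
  obtain ⟨⟨x, hx⟩⟩ := (Nat.card_pos_iff.mp hi).1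
  exact ⟨x, hx⟩

end Labeling

section EdgeFinset

variable {G : SimpleGraph V} [Fintype G.edgeSet]

lemma isRootedAt_edgeFinset (hconn : G.Connected) (u : V) :
    IsRootedAt G.edgeFinset.val u := by
  intro e he
  induction e with
  | h a b =>
    have hua := (SimpleGraph.reachable_iff_reflTransGen u a).mp (hconn.preconnected u a)
    exact ⟨a, Sym2.mem_mk_left a b,
      Relation.ReflTransGen.mono (fun x y hxy => G.mem_edgeFinset.mpr hxy) u a hua⟩

lemma natCard_subtype_edgeSet (p : Sym2 V → Prop) [DecidablePred p] :
    Nat.card {e : G.edgeSet // p e} = G.edgeFinset.val.countP p := by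
  rw [Nat.card_congr (Equiv.subtypeSubtypeEquivSubtypeInter _ p), countP_eq_card_filter,
    ← Finset.filter_val, Finset.card_val, ← Nat.card_eq_finsetCard]
  simp

variable [DecidableEq V]

def splitLabeling (Z : Multiset (Sym2 V)) (e : G.edgeSet) : ZMod 2 :=
  if (e : Sym2 V) ∈ Z then 0 else 1

variable {Z W : Multiset (Sym2 V)}

lemma natCard_splitLabeling_zero (hZW : Z + W = G.edgeFinset.val) (q : Sym2 V → Prop)
    [DecidablePred q] : Nat.card {e : G.edgeSet // splitLabeling Z e = 0 ∧ q e} = Z.countP q := by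
  refine
    (natCard_subtype_edgeSet fun e => (if e ∈ Z then 0 else 1 : ZMod 2) = 0 ∧ q e).trans ?_
  rw [← hZW, countP_add]
  have hdisj := disjoint_of_nodup_add (hZW ▸ G.edgeFinset.nodup)
  have hZ : Z.countP (fun e => (if e ∈ Z then 0 else 1 : ZMod 2) = 0 ∧ q e) = Z.countP q :=
    countP_congr rfl fun e he => by simp [he]
  have hW : W.countP (fun e => (if e ∈ Z then 0 else 1 : ZMod 2) = 0 ∧ q e) = 0 :=
    countP_eq_zero.mpr fun e he => by simp [disjoint_right.mp hdisj he]
  rw [hZ, hW, add_zero]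

lemma natCard_splitLabeling_one (hZW : Z + W = G.edgeFinset.val) (q : Sym2 V → Prop)
    [DecidablePred q] : Nat.card {e : G.edgeSet // splitLabeling Z e = 1 ∧ q e} = W.countP q := by
  refine
    (natCard_subtype_edgeSet fun e => (if e ∈ Z then 0 else 1 : ZMod 2) = 1 ∧ q e).trans ?_
  rw [← hZW, countP_add]
  have hdisj := disjoint_of_nodup_add (hZW ▸ G.edgeFinset.nodup)
  have hZ : Z.countP (fun e => (if e ∈ Z then 0 else 1 : ZMod 2) = 1 ∧ q e) = 0 :=
    countP_eq_zero.mpr fun e he => by simp [he]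
  have hW : W.countP (fun e => (if e ∈ Z then 0 else 1 : ZMod 2) = 1 ∧ q e) = W.countP q :=
    countP_congr rfl fun e he => by simp [disjoint_right.mp hdisj he]
  rw [hZ, hW, zero_add]

lemma edgeCount_splitLabeling_zero (hZW : Z + W = G.edgeFinset.val) :
    edgeCount G (splitLabeling Z) 0 = card Z := by
  simpa [edgeCount] using natCard_splitLabeling_zero hZW fun _ => True

lemma edgeCount_splitLabeling_one (hZW : Z + W = G.edgeFinset.val) :
    edgeCount G (splitLabeling Z) 1 = card W := by
  simpa [edgeCount] using natCard_splitLabeling_one hZW fun _ => True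

end EdgeFinset

section CherryLabeling

variable [DecidableEq V]

lemma netOutDegree_map_ends {P : Multiset (Cherry V)}
    (hP : ∀ c ∈ P, ¬c.leftEdge.IsDiag ∧ ¬c.rightEdge.IsDiag) (v : V) :
    netOutDegree (P.map Cherry.ends) v =
      ((P.map Cherry.leftEdge).countP (v ∈ ·) : ℤ) -
        (P.map Cherry.rightEdge).countP (v ∈ ·) := by
  induction P using Multiset.induction_on with
  | empty => simp [netOutDegree]
  | cons c P ih =>
    have hc := hP c (mem_cons_self c P)
    rw [map_cons, map_cons, map_cons, countP_cons, countP_cons, netOutDegree_cons,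
      ih fun d hd => hP d (mem_cons_of_mem hd)]
    obtain ⟨a, b, d⟩ := c
    simp only [Cherry.leftEdge, Cherry.rightEdge, Cherry.ends, Sym2.mk_isDiag_iff,
      Sym2.mem_iff] at hc ⊢
    push_cast
    split_ifs <;> grind

variable {G : SimpleGraph V} [Fintype G.edgeSet]

lemma labDeg_sub_labDeg_splitLabeling {P : Multiset (Cherry V)}
    (hP : IsCherryDecomposition P G.edgeFinset.val) (v : V) :
    (labDeg G (splitLabeling (P.map Cherry.leftEdge)) 0 v : ℤ) -
        labDeg G (splitLabeling (P.map Cherry.leftEdge)) 1 v =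
      netOutDegree (P.map Cherry.ends) v := by
  rw [labDeg, labDeg, natCard_splitLabeling_zero hP (v ∈ ·),
    natCard_splitLabeling_one hP (v ∈ ·)]
  have hG (e) (he : e ∈ P.map Cherry.leftEdge + P.map Cherry.rightEdge) : ¬e.IsDiag := by
    unfold IsCherryDecomposition at hP
    exact G.not_isDiag_of_mem_edgeSet (G.mem_edgeFinset.mp (Finset.mem_val.mp (hP ▸ he)))
  exact (netOutDegree_map_ends (fun c hc =>
    ⟨hG _ (mem_add.mpr (.inl (mem_map_of_mem _ hc))),
      hG _ (mem_add.mpr (.inr (mem_map_of_mem _ hc)))⟩) v).symm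

end CherryLabeling

theorem exists_labeling_abs_labDeg_sub_le_one [Fintype V] {G : SimpleGraph V}
    (hconn : G.Connected) (heven : Even (Nat.card G.edgeSet)) :
    ∃ f : G.edgeSet → ZMod 2, edgeCount G f 0 = edgeCount G f 1 ∧
      ∀ v, |(labDeg G f 0 v : ℤ) - labDeg G f 1 v| ≤ 1 := by
  classical
  obtain ⟨u⟩ := hconn.nonempty
  have hcard : card G.edgeFinset.val = Nat.card G.edgeSet := by
    rw [Finset.card_val, edgeFinset_card, Nat.card_eq_fintype_card]
  obtain ⟨P, hP⟩ :=
    (exists_cherryDecomposition (isRootedAt_edgeFinset hconn u)).1 (hcard ▸ heven)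
  obtain ⟨Q, hQ, hbal⟩ := hP.exists_abs_netOutDegree_le_one
  refine ⟨splitLabeling (Q.map Cherry.leftEdge), ?_, fun v => ?_⟩
  · rw [edgeCount_splitLabeling_zero hQ, edgeCount_splitLabeling_one hQ, card_map, card_map]
  · rw [labDeg_sub_labDeg_splitLabeling hQ]
    exact hbal v

end

theorem connected_even_size_stronglyEdgeBalanced {V : Type*} [Fintype V]
    (G : SimpleGraph V) (hconn : G.Connected)
    (heven : Even (Nat.card G.edgeSet)) (hpos : 0 < Nat.card G.edgeSet) :
    StronglyEdgeBalanced G := by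
  obtain ⟨f, hcount, hdeg⟩ := exists_labeling_abs_labDeg_sub_le_one hconn heven
  refine ⟨f, ⟨surjective_of_edgeCount_eq hcount hpos, ?_⟩,
    vertexCount_eq_of_abs_labDeg_sub_le_one hcount hdeg, hcount⟩
  rw [hcount, sub_self, abs_zero]
  exact zero_le_one
end

section
/- If G and H are finite simple graphs each having at least one edge and the direct product G×H is connected, then G×H is strongly edge-balanced. -/
open SimpleGraph

/-- The lexicographic product (composition) `G[H]`. -/
def lexProd {α β : Type*} (G : SimpleGraph α) (H : SimpleGraph β) :
    SimpleGraph (α × β) where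
  Adj x y := G.Adj x.1 y.1 ∨ (x.1 = y.1 ∧ H.Adj x.2 y.2)
  symm := ⟨fun x y h =>
    h.elim (fun h' => Or.inl h'.symm) (fun ⟨he, h2⟩ => Or.inr ⟨he.symm, h2.symm⟩)⟩
  loopless := ⟨fun x h =>
    h.elim (G.loopless.irrefl x.1) (fun ⟨_, h2⟩ => H.loopless.irrefl x.2 h2)⟩

/-- The direct (tensor, Kronecker) product `G × H`. -/
def tensorProd {α β : Type*} (G : SimpleGraph α) (H : SimpleGraph β) :
    SimpleGraph (α × β) where
  Adj x y := G.Adj x.1 y.1 ∧ H.Adj x.2 y.2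
  symm := ⟨fun _ _ ⟨h1, h2⟩ => ⟨h1.symm, h2.symm⟩⟩
  loopless := ⟨fun x h => G.loopless.irrefl x.1 h.1⟩

/-!
Orient `G` and `H` so that at every vertex out-degree and in-degree differ by at most one; this is
possible in any finite multigraph, by merging two edges `v a`, `v c` at a common vertex into one
edge `a c` and inducting on the number of non-loop edges. Label an edge `(u, x) (v, y)` of `G × H`
by `0` if the arcs between `u, v` and between `x, y` point the same way (`u → v` and `x → y`, or
`v → u` and `y → x`), and by `1` otherwise. Swapping second coordinates,
`(u, x) (v, y) ↦ (u, y) (v, x)`, is an involution of the edges that flips every label, so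
`e_f(0) = e_f(1)`. At `(u, x)` the `0`-degree minus the `1`-degree is `d_G(u) d_H(x)`, where
`d = out − in`; since `d_G ∈ {-1, 0, 1}` sums to zero, it takes the values `1` and `-1` equally
often, whence `v_f(0) = v_f(1)`.
-/

open Finset Function

section Flow

variable {ι V : Type*} [DecidableEq V]

def arcFlow (a : V × V) : V → ℤ := Pi.single a.1 1 - Pi.single a.2 1

def netFlow [Fintype ι] (q : ι → V × V) : V → ℤ := ∑ k, arcFlow (q k)

lemma arcFlow_add_arcFlow (a v c : V) : arcFlow (a, v) + arcFlow (v, c) = arcFlow (a, c) := by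
  simp only [arcFlow]
  abel

lemma arcFlow_eq_zero_of_isDiag {a : V × V} (h : (s(a.1, a.2)).IsDiag) : arcFlow a = 0 := by
  obtain ⟨x, y⟩ := a
  obtain rfl : x = y := Sym2.mk_isDiag_iff.1 h
  exact sub_self _

lemma mem_and_not_isDiag_of_arcFlow_ne_zero {a : V × V} {x : V} (h : arcFlow a x ≠ 0) :
    x ∈ s(a.1, a.2) ∧ ¬(s(a.1, a.2)).IsDiag := by
  obtain ⟨y, z⟩ := a
  refine ⟨?_, fun hd => h (by rw [arcFlow_eq_zero_of_isDiag hd, Pi.zero_apply])⟩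
  by_contra hx
  simp only [Sym2.mem_iff, not_or] at hx
  simp [arcFlow, hx.1, hx.2] at h

lemma abs_arcFlow_le_one (a : V × V) (x : V) : |arcFlow a x| ≤ 1 := by
  simp only [arcFlow, Pi.sub_apply, Pi.single_apply]
  split_ifs <;> norm_num

variable [Fintype ι]

lemma netFlow_apply (q : ι → V × V) (x : V) :
    netFlow q x = Nat.card {k // (q k).1 = x} - Nat.card {k // (q k).2 = x} := by
  classical
  simp only [netFlow, arcFlow, Finset.sum_apply, Pi.sub_apply, Pi.single_apply, sum_sub_distrib,
    sum_boole, Nat.card_eq_fintype_card, Fintype.card_subtype, eq_comm]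

lemma abs_netFlow_le_one {q : ι → V × V} {x : V}
    (h : ∀ i j, arcFlow (q i) x ≠ 0 → arcFlow (q j) x ≠ 0 → i = j) : |netFlow q x| ≤ 1 := by
  rw [netFlow, Finset.sum_apply]
  by_cases hx : ∃ k, arcFlow (q k) x ≠ 0
  · obtain ⟨k, hk⟩ := hx
    rw [Fintype.sum_eq_single k fun j hj => by_contra fun hj' => hj (h j k hj' hk)]
    exact abs_arcFlow_le_one _ _
  · push Not at hx
    simp [hx]

lemma exists_netFlow_eq_of_merge [DecidableEq ι] {e : ι → Sym2 V} {i j : ι} (hij : i ≠ j)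
    {a c v : V} (hi : e i = s(v, a)) (hj : e j = s(v, c)) {q' : ι → V × V}
    (hq' : ∀ k, s((q' k).1, (q' k).2) = update (update e i s(a, c)) j s(v, v) k) :
    ∃ q : ι → V × V, (∀ k, s((q k).1, (q k).2) = e k) ∧ netFlow q = netFlow q' := by
  have hq'i : s((q' i).1, (q' i).2) = s(a, c) := by simpa [hij] using hq' i
  have hq'j : arcFlow (q' j) = 0 := arcFlow_eq_zero_of_isDiag (by simp [hq' j])
  obtain ⟨arcI, arcJ, hI, hJ, hflow⟩ : ∃ arcI arcJ : V × V, s(arcI.1, arcI.2) = s(v, a) ∧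
      s(arcJ.1, arcJ.2) = s(v, c) ∧ arcFlow arcI + arcFlow arcJ = arcFlow (q' i) := by
    rcases (Sym2.mk_eq_mk_iff (q := (a, c))).1 hq'i with h | h
    · exact ⟨(a, v), (v, c), Sym2.eq_swap, rfl, by rw [h, arcFlow_add_arcFlow]⟩
    · exact ⟨(v, a), (c, v), rfl, Sym2.eq_swap, by rw [h, add_comm, arcFlow_add_arcFlow]; rfl⟩
  refine ⟨update (update q' i arcI) j arcJ, fun k => ?_, ?_⟩
  · rcases eq_or_ne k j with rfl | hkj
    · simpa [hj] using hJ
    rcases eq_or_ne k i with rfl | hki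
    · simpa [hkj, hi] using hI
    simpa [hkj, hki] using hq' k
  · rw [← sub_eq_zero, netFlow, netFlow, ← sum_sub_distrib,
      Fintype.sum_eq_add i j hij fun k hk => by simp [hk.1, hk.2]]
    simp [hij, hq'j, ← hflow]

lemma card_not_isDiag_merge_lt [DecidableEq ι] {e : ι → Sym2 V} {i j : ι} (hij : i ≠ j)
    (hi : ¬(e i).IsDiag) (hj : ¬(e j).IsDiag) (z : Sym2 V) (v : V) :
    #{k | ¬(update (update e i z) j s(v, v) k).IsDiag} < #{k | ¬(e k).IsDiag} := by
  refine card_lt_card <| (ssubset_iff_of_subset fun k => ?_).2 ⟨j, by simp [hj], by simp⟩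
  rcases eq_or_ne k j with rfl | hkj
  · simp
  rcases eq_or_ne k i with rfl | hki
  · simp [hi]
  simp [hkj, hki]

theorem exists_abs_netFlow_le_one (e : ι → Sym2 V) :
    ∃ q : ι → V × V, (∀ k, s((q k).1, (q k).2) = e k) ∧ ∀ x, |netFlow q x| ≤ 1 := by
  induction hn : #{k | ¬(e k).IsDiag} using Nat.strong_induction_on generalizing e with
  | _ n ih =>
  classical
  by_cases hshare : ∃ i j v, i ≠ j ∧ ¬(e i).IsDiag ∧ ¬(e j).IsDiag ∧ v ∈ e i ∧ v ∈ e j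
  · obtain ⟨i, j, v, hij, hi, hj, hvi, hvj⟩ := hshare
    obtain ⟨q', hq', hbal⟩ := ih _ (hn ▸ card_not_isDiag_merge_lt hij hi hj _ v) _ rfl
    obtain ⟨q, hq, hflow⟩ := exists_netFlow_eq_of_merge hij (Sym2.other_spec hvi).symm
      (Sym2.other_spec hvj).symm hq'
    exact ⟨q, hq, hflow ▸ hbal⟩
  · push Not at hshare
    choose q hq using fun k => (Quot.exists_rep (e k) : ∃ p : V × V, s(p.1, p.2) = e k)
    refine ⟨q, hq, fun x => abs_netFlow_le_one fun i j hi hj => by_contra fun hij => ?_⟩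
    obtain ⟨hxi, hdi⟩ := mem_and_not_isDiag_of_arcFlow_ne_zero hi
    obtain ⟨hxj, hdj⟩ := mem_and_not_isDiag_of_arcFlow_ne_zero hj
    simp only [hq] at hxi hdi hxj hdj
    exact hshare i j x hij hdi hdj hxi hxj

end Flow

namespace Digraph

variable {V : Type*} (D : Digraph V)

noncomputable def outDeg (u : V) : ℕ := Nat.card {v // D.Adj u v}

noncomputable def inDeg (v : V) : ℕ := Nat.card {u // D.Adj u v}

noncomputable def imbalance (u : V) : ℤ := D.outDeg u - D.inDeg u

lemma sum_outDeg_eq_sum_inDeg [Fintype V] : ∑ u, D.outDeg u = ∑ u, D.inDeg u := by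
  have hout := Nat.card_congr (Equiv.subtypeProdEquivSigmaSubtype fun u v => D.Adj u v)
  have hin := Nat.card_congr (Equiv.subtypeProdEquivSigmaSubtype fun v u => D.Adj u v)
  rw [Nat.card_sigma] at hout hin
  simp only [outDeg, inDeg]
  rw [← hout, ← hin]
  exact Nat.card_congr ((Equiv.prodComm V V).subtypeEquiv fun _ => Iff.rfl)

lemma sum_imbalance_eq_zero [Fintype V] : ∑ u, D.imbalance u = 0 := by
  simp only [imbalance, sum_sub_distrib, ← Nat.cast_sum, sum_outDeg_eq_sum_inDeg, sub_self]

structure IsOrientation (G : SimpleGraph V) : Prop where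
  toSimpleGraphInclusive_eq : D.toSimpleGraphInclusive = G
  asymm : ∀ ⦃u v⦄, D.Adj u v → ¬D.Adj v u

variable {D} {G : SimpleGraph V}

lemma IsOrientation.adj_iff (hD : D.IsOrientation G) {u v : V} :
    G.Adj u v ↔ D.Adj u v ∨ D.Adj v u := by
  rw [← hD.toSimpleGraphInclusive_eq, toSimpleGraphInclusive, SimpleGraph.fromRel_adj,
    and_iff_right_iff_imp]
  rintro (h | h) rfl <;> exact hD.asymm h h

lemma IsOrientation.adj_swap_iff (hD : D.IsOrientation G) {u v : V} (h : G.Adj u v) :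
    D.Adj v u ↔ ¬D.Adj u v :=
  ⟨fun hvu huv => hD.asymm huv hvu, (hD.adj_iff.1 h).resolve_left⟩

end Digraph

section

variable {ι V : Type*}

lemma natCard_subtype_fst_eq {q : ι → V × V} (hq : Injective q) (u : V) :
    Nat.card {k // (q k).1 = u} = Nat.card {v // (u, v) ∈ Set.range q} :=
  Nat.card_eq_of_bijective (fun k => ⟨(q k).2, k, Prod.ext k.2 rfl⟩)
    ⟨fun k k' h => Subtype.ext (hq (Prod.ext (k.2.trans k'.2.symm) (congrArg Subtype.val h))),
      fun ⟨_, k, hk⟩ => ⟨⟨k, congrArg Prod.fst hk⟩, Subtype.ext (congrArg Prod.snd hk)⟩⟩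

lemma natCard_subtype_snd_eq {q : ι → V × V} (hq : Injective q) (v : V) :
    Nat.card {k // (q k).2 = v} = Nat.card {u // (u, v) ∈ Set.range q} :=
  Nat.card_eq_of_bijective (fun k => ⟨(q k).1, k, Prod.ext rfl k.2⟩)
    ⟨fun k k' h => Subtype.ext (hq (Prod.ext (congrArg Subtype.val h) (k.2.trans k'.2.symm))),
      fun ⟨_, k, hk⟩ => ⟨⟨k, congrArg Prod.snd hk⟩, Subtype.ext (congrArg Prod.fst hk)⟩⟩

end

theorem SimpleGraph.exists_isOrientation_abs_imbalance_le_one {V : Type*} [Fintype V]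
    (G : SimpleGraph V) : ∃ D : Digraph V, D.IsOrientation G ∧ ∀ u, |D.imbalance u| ≤ 1 := by
  classical
  obtain ⟨q, hq, hbal⟩ := exists_abs_netFlow_le_one (Subtype.val : G.edgeSet → Sym2 V)
  have hinj : Injective q := fun k k' h => Subtype.ext <| by rw [← hq, ← hq, h]
  have harc : ∀ {u v}, (u, v) ∈ Set.range q → G.Adj u v := by
    rintro u v ⟨k, hk⟩
    have hk' := hq k
    rw [hk] at hk'
    exact G.mem_edgeSet.1 (hk' ▸ k.2)
  refine ⟨⟨fun u v => (u, v) ∈ Set.range q⟩, ⟨?_, ?_⟩, fun u => ?_⟩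
  · ext u v
    refine ⟨fun h => h.2.elim harc fun h' => (harc h').symm, fun h => ⟨h.ne, ?_⟩⟩
    rcases (Sym2.mk_eq_mk_iff (q := (u, v))).1 (hq ⟨s(u, v), h⟩) with huv | hvu
    · exact Or.inl ⟨_, huv⟩
    · exact Or.inr ⟨_, hvu⟩
  · rintro u v ⟨k, hk⟩ ⟨k', hk'⟩
    have hkk' : k = k' := Subtype.ext <| by rw [← hq, ← hq, hk, hk', Sym2.eq_swap]
    subst hkk'
    exact (harc ⟨k, hk⟩).ne (congrArg Prod.fst (hk.symm.trans hk'))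
  · rw [Digraph.imbalance, Digraph.outDeg, Digraph.inDeg, ← natCard_subtype_fst_eq hinj,
      ← natCard_subtype_snd_eq hinj, ← netFlow_apply]
    exact hbal u

section Counting

variable {α β : Type*}

lemma natCard_prod_or [Finite α] [Finite β] {P P' : α → Prop} {Q Q' : β → Prop}
    (h : ∀ a, P a → ¬P' a) :
    Nat.card {z : α × β // P z.1 ∧ Q z.2 ∨ P' z.1 ∧ Q' z.2} =
      Nat.card {a // P a} * Nat.card {b // Q b} + Nat.card {a // P' a} * Nat.card {b // Q' b} := by
  classical
  have hdisj : Disjoint (fun z : α × β => P z.1 ∧ Q z.2) (fun z => P' z.1 ∧ Q' z.2) :=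
    Pi.disjoint_iff.2 fun z => by simpa using fun hP _ hP' _ => h z.1 hP hP'
  rw [Nat.card_congr (subtypeOrEquiv _ _ hdisj), Nat.card_sum,
    Nat.card_congr Equiv.subtypeProdEquivProd, Nat.card_congr Equiv.subtypeProdEquivProd,
    Nat.card_prod, Nat.card_prod]

lemma natCard_pos_eq_natCard_neg [Fintype α] {f : α → ℤ} (hf : ∀ a, |f a| ≤ 1)
    (hsum : ∑ a, f a = 0) : Nat.card {a // 0 < f a} = Nat.card {a // f a < 0} := by
  classical
  have hsign : ∀ a, f a = (if 0 < f a then 1 else 0) - (if f a < 0 then 1 else 0) := fun a => by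
    have := abs_le.1 (hf a)
    split_ifs <;> omega
  rw [Fintype.sum_congr _ _ hsign, sum_sub_distrib, sum_boole, sum_boole, sub_eq_zero] at hsum
  simpa [Nat.card_eq_fintype_card, Fintype.card_subtype] using hsum

lemma natCard_mul_pos_eq_natCard_mul_neg [Finite α] [Finite β] {f : α → ℤ} (g : β → ℤ)
    (hf : Nat.card {a // 0 < f a} = Nat.card {a // f a < 0}) :
    Nat.card {z : α × β // 0 < f z.1 * g z.2} = Nat.card {z : α × β // f z.1 * g z.2 < 0} := by
  simp only [mul_pos_iff, mul_neg_iff]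
  have hpos := natCard_prod_or (Q := fun b => 0 < g b) (Q' := fun b => g b < 0)
    fun a (h : 0 < f a) h' => h.not_gt h'
  have hneg := natCard_prod_or (Q := fun b => g b < 0) (Q' := fun b => 0 < g b)
    fun a (h : 0 < f a) h' => h.not_gt h'
  rw [hpos, hneg, hf]
  ring

end Counting

section Labeling

variable {V : Type*} {K : SimpleGraph V}

lemma labDeg_eq_natCard (L : Sym2 V → ZMod 2) (i : ZMod 2) (v : V) :
    labDeg K (fun e => L e) i v = Nat.card {w // K.Adj v w ∧ L s(v, w) = i} :=
  Nat.card_congr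
    { toFun := fun e => ⟨Sym2.Mem.other e.2.2,
        K.mem_edgeSet.1 ((Sym2.other_spec e.2.2).symm ▸ e.1.2),
        (Sym2.other_spec e.2.2).symm ▸ e.2.1⟩
      invFun := fun w => ⟨⟨s(v, w), w.2.1⟩, w.2.2, Sym2.mem_mk_left _ _⟩
      left_inv := fun e => Subtype.ext (Subtype.ext (Sym2.other_spec e.2.2))
      right_inv := fun _ => Subtype.ext (Sym2.congr_right.1 (Sym2.other_spec _)) }

lemma edgeCount_zero_eq_one_of_involutive {f : K.edgeSet → ZMod 2} {τ : K.edgeSet → K.edgeSet}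
    (hτ : Involutive τ) (hf : ∀ e, f (τ e) = f e + 1) : edgeCount K f 0 = edgeCount K f 1 :=
  Nat.card_congr (hτ.toPerm.subtypeEquiv fun e => by
    rw [Involutive.coe_toPerm, hf, add_eq_right])

theorem stronglyEdgeBalanced_of_involutive (hK : K.edgeSet.Nonempty) {f : K.edgeSet → ZMod 2}
    {τ : K.edgeSet → K.edgeSet} (hτ : Involutive τ) (hf : ∀ e, f (τ e) = f e + 1)
    (hv : vertexCount K f 0 = vertexCount K f 1) : StronglyEdgeBalanced K := by
  have he := edgeCount_zero_eq_one_of_involutive hτ hf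
  refine ⟨f, ⟨fun c => ?_, by simp [he]⟩, hv, he⟩
  obtain ⟨e, he'⟩ := hK
  have hcases : ∀ a c : ZMod 2, a = c ∨ a + 1 = c := by decide
  rcases hcases (f ⟨e, he'⟩) c with h | h
  exacts [⟨_, h⟩, ⟨τ _, (hf _).trans h⟩]

end Labeling

section Tensor

variable {α β : Type*} {G : SimpleGraph α} {H : SimpleGraph β} {DG : Digraph α} {DH : Digraph β}

open Classical in
noncomputable def alignedLabel (DG : Digraph α) (DH : Digraph β) : Sym2 (α × β) → ZMod 2 :=
  Sym2.lift ⟨fun p q => if DG.Adj p.1 q.1 ∧ DH.Adj p.2 q.2 ∨ DG.Adj q.1 p.1 ∧ DH.Adj q.2 p.2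
    then 0 else 1, fun p q => by simp only [or_comm]⟩

open Classical in
lemma alignedLabel_mk (p q : α × β) : alignedLabel DG DH s(p, q) =
    if DG.Adj p.1 q.1 ∧ DH.Adj p.2 q.2 ∨ DG.Adj q.1 p.1 ∧ DH.Adj q.2 p.2 then 0 else 1 :=
  rfl

def crossEdge : Sym2 (α × β) → Sym2 (α × β) :=
  Sym2.lift ⟨fun p q => s((p.1, q.2), (q.1, p.2)), fun _ _ => Sym2.eq_swap⟩

lemma crossEdge_mk (p q : α × β) : crossEdge s(p, q) = s((p.1, q.2), (q.1, p.2)) :=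
  rfl

lemma crossEdge_involutive : Involutive (crossEdge : Sym2 (α × β) → Sym2 (α × β)) :=
  Sym2.ind fun _ _ => rfl

lemma crossEdge_mem_edgeSet {e : Sym2 (α × β)} (he : e ∈ (tensorProd G H).edgeSet) :
    crossEdge e ∈ (tensorProd G H).edgeSet := by
  induction e using Sym2.ind with
  | _ p q => exact ⟨he.1, he.2.symm⟩

lemma tensorProd_adj_iff (hDG : DG.IsOrientation G) (hDH : DH.IsOrientation H) {p q : α × β} :
    (tensorProd G H).Adj p q ↔
      (DG.Adj p.1 q.1 ∨ DG.Adj q.1 p.1) ∧ (DH.Adj p.2 q.2 ∨ DH.Adj q.2 p.2) :=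
  and_congr hDG.adj_iff hDH.adj_iff

lemma alignedLabel_crossEdge (hDG : DG.IsOrientation G) (hDH : DH.IsOrientation H)
    {e : Sym2 (α × β)} (he : e ∈ (tensorProd G H).edgeSet) :
    alignedLabel DG DH (crossEdge e) = alignedLabel DG DH e + 1 := by
  induction e using Sym2.ind with
  | _ p q =>
  rw [crossEdge_mk, alignedLabel_mk, alignedLabel_mk]
  have := hDG.adj_swap_iff he.1
  have := hDH.adj_swap_iff he.2
  dsimp only
  split_ifs <;> first | decide | tauto

lemma labDeg_alignedLabel_zero [Finite α] [Finite β] (hDG : DG.IsOrientation G)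
    (hDH : DH.IsOrientation H) (w : α × β) :
    labDeg (tensorProd G H) (fun e => alignedLabel DG DH e) 0 w =
      DG.outDeg w.1 * DH.outDeg w.2 + DG.inDeg w.1 * DH.inDeg w.2 := by
  rw [labDeg_eq_natCard, Digraph.outDeg, Digraph.outDeg, Digraph.inDeg, Digraph.inDeg,
    ← natCard_prod_or fun _ => @hDG.asymm _ _]
  refine Nat.card_congr (Equiv.subtypeEquivRight fun z => ?_)
  rw [tensorProd_adj_iff hDG hDH, alignedLabel_mk]
  split_ifs <;> simp <;> tauto

lemma labDeg_alignedLabel_one [Finite α] [Finite β] (hDG : DG.IsOrientation G)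
    (hDH : DH.IsOrientation H) (w : α × β) :
    labDeg (tensorProd G H) (fun e => alignedLabel DG DH e) 1 w =
      DG.outDeg w.1 * DH.inDeg w.2 + DG.inDeg w.1 * DH.outDeg w.2 := by
  rw [labDeg_eq_natCard, Digraph.outDeg, Digraph.outDeg, Digraph.inDeg, Digraph.inDeg,
    ← natCard_prod_or fun _ => @hDG.asymm _ _]
  refine Nat.card_congr (Equiv.subtypeEquivRight fun z => ?_)
  have := @hDG.asymm w.1 z.1
  have := @hDH.asymm w.2 z.2
  rw [tensorProd_adj_iff hDG hDH, alignedLabel_mk]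
  split_ifs <;> simp <;> tauto

lemma labDeg_alignedLabel_zero_sub_one [Finite α] [Finite β] (hDG : DG.IsOrientation G)
    (hDH : DH.IsOrientation H) (w : α × β) :
    (labDeg (tensorProd G H) (fun e => alignedLabel DG DH e) 0 w : ℤ) -
        labDeg (tensorProd G H) (fun e => alignedLabel DG DH e) 1 w =
      DG.imbalance w.1 * DH.imbalance w.2 := by
  rw [labDeg_alignedLabel_zero hDG hDH, labDeg_alignedLabel_one hDG hDH, Digraph.imbalance,
    Digraph.imbalance]
  push_cast
  ring

lemma labDeg_one_lt_labDeg_zero_iff [Finite α] [Finite β] (hDG : DG.IsOrientation G)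
    (hDH : DH.IsOrientation H) (w : α × β) :
    labDeg (tensorProd G H) (fun e => alignedLabel DG DH e) 1 w <
        labDeg (tensorProd G H) (fun e => alignedLabel DG DH e) 0 w ↔
      0 < DG.imbalance w.1 * DH.imbalance w.2 := by
  rw [← Nat.cast_lt (α := ℤ), ← sub_pos, labDeg_alignedLabel_zero_sub_one hDG hDH]

lemma labDeg_zero_lt_labDeg_one_iff [Finite α] [Finite β] (hDG : DG.IsOrientation G)
    (hDH : DH.IsOrientation H) (w : α × β) :
    labDeg (tensorProd G H) (fun e => alignedLabel DG DH e) 0 w <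
        labDeg (tensorProd G H) (fun e => alignedLabel DG DH e) 1 w ↔
      DG.imbalance w.1 * DH.imbalance w.2 < 0 := by
  rw [← Nat.cast_lt (α := ℤ), ← sub_neg, labDeg_alignedLabel_zero_sub_one hDG hDH]

theorem vertexCount_alignedLabel [Fintype α] [Finite β] (hDG : DG.IsOrientation G)
    (hDH : DH.IsOrientation H) (hbal : ∀ u, |DG.imbalance u| ≤ 1) :
    vertexCount (tensorProd G H) (fun e => alignedLabel DG DH e) 0 =
      vertexCount (tensorProd G H) (fun e => alignedLabel DG DH e) 1 := by
  rw [vertexCount, vertexCount, sub_zero, sub_self,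
    Nat.card_congr (Equiv.subtypeEquivRight (labDeg_one_lt_labDeg_zero_iff hDG hDH)),
    Nat.card_congr (Equiv.subtypeEquivRight (labDeg_zero_lt_labDeg_one_iff hDG hDH))]
  exact natCard_mul_pos_eq_natCard_mul_neg _
    (natCard_pos_eq_natCard_neg hbal DG.sum_imbalance_eq_zero)

lemma tensorProd_edgeSet_nonempty (hG : G.edgeSet.Nonempty) (hH : H.edgeSet.Nonempty) :
    (tensorProd G H).edgeSet.Nonempty := by
  obtain ⟨e, he⟩ := hG
  obtain ⟨f, hf⟩ := hH
  induction e using Sym2.ind with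
  | _ u v =>
  induction f using Sym2.ind with
  | _ x y => exact ⟨s((u, x), (v, y)), he, hf⟩

end Tensor

theorem tensorProd_stronglyEdgeBalanced_general {α β : Type*} [Fintype α] [Fintype β]
    (G : SimpleGraph α) (H : SimpleGraph β)
    (hG : G.edgeSet.Nonempty) (hH : H.edgeSet.Nonempty) :
    StronglyEdgeBalanced (tensorProd G H) := by
  obtain ⟨DG, hDG, hbal⟩ := G.exists_isOrientation_abs_imbalance_le_one
  obtain ⟨DH, hDH, -⟩ := H.exists_isOrientation_abs_imbalance_le_one
  exact stronglyEdgeBalanced_of_involutive (tensorProd_edgeSet_nonempty hG hH)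
    (τ := fun e => ⟨crossEdge e, crossEdge_mem_edgeSet e.2⟩)
    (fun e => Subtype.ext (crossEdge_involutive e.1)) (fun e => alignedLabel_crossEdge hDG hDH e.2)
    (vertexCount_alignedLabel hDG hDH hbal)

theorem tensorProd_stronglyEdgeBalanced {α β : Type*} [Fintype α] [Fintype β]
    (G : SimpleGraph α) (H : SimpleGraph β)
    (hG : G.edgeSet.Nonempty) (hH : H.edgeSet.Nonempty)
    (hconn : (tensorProd G H).Connected) :
    StronglyEdgeBalanced (tensorProd G H) :=
  tensorProd_stronglyEdgeBalanced_general G H hG hH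
end

section
/- Let G be an r-regular finite simple graph on n vertices with r odd, n ≡ 2 (mod 4), and at least one edge. Then every edge-friendly labeling f of G satisfies (r+1)·|v_f(0) − v_f(1)| ≤ (r−1)·n + 4; in particular, every element k of EBI(G) satisfies (r+1)·k ≤ (r−1)·n + 4. -/
open SimpleGraph

/-- `|v_f(0) - v_f(1)|` for an edge labeling `f`. -/
noncomputable def ebIndex {V : Type*} (G : SimpleGraph V) (f : G.edgeSet → ZMod 2) : ℕ :=
  ((vertexCount G f 0 : ℤ) - (vertexCount G f 1 : ℤ)).natAbs

/-- The edge-balanced index set of `G`. -/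
def EBI {V : Type*} (G : SimpleGraph V) : Set ℕ :=
  {k | ∃ f : G.edgeSet → ZMod 2, EdgeFriendly G f ∧ ebIndex G f = k}

theorem maxEBI_regular_two_mod_four {V : Type*} [Fintype V]
    (G : SimpleGraph V) [DecidableRel G.Adj] {r : ℕ}
    (hreg : G.IsRegularOfDegree r) (hr : Odd r)
    (hn : Fintype.card V % 4 = 2) (he : G.edgeSet.Nonempty) :
    (∀ f : G.edgeSet → ZMod 2, EdgeFriendly G f →
      ((r : ℤ) + 1) * |(vertexCount G f 0 : ℤ) - (vertexCount G f 1 : ℤ)| ≤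
        ((r : ℤ) - 1) * (Fintype.card V) + 4) ∧
    ∀ k ∈ EBI G, ((r : ℤ) + 1) * (k : ℤ) ≤ ((r : ℤ) - 1) * (Fintype.card V) + 4 := by
  classical
  have main : ∀ f : G.edgeSet → ZMod 2, EdgeFriendly G f →
      ((r : ℤ) + 1) * |(vertexCount G f 0 : ℤ) - (vertexCount G f 1 : ℤ)| ≤
        ((r : ℤ) - 1) * (Fintype.card V) + 4 := by
    intro f hf
    set n := Fintype.card V with hnn
    -- Nat.card → Finset.card conversions
    have hcount : ∀ i : ZMod 2,
        edgeCount G f i = (Finset.univ.filter (fun e : G.edgeSet => f e = i)).card := by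
      intro i
      rw [edgeCount, Nat.card_eq_fintype_card, Fintype.card_subtype]
    have hlab : ∀ (i : ZMod 2) (v : V), labDeg G f i v =
        (Finset.univ.filter (fun e : G.edgeSet => f e = i ∧ v ∈ (e : Sym2 V))).card := by
      intro i v
      rw [labDeg, Nat.card_eq_fintype_card, Fintype.card_subtype]
    have hvs : ∀ i j : ZMod 2, (1 - i) = j → vertexCount G f i =
        (Finset.univ.filter (fun v : V => labDeg G f j v < labDeg G f i v)).card := by
      intro i j hj
      rw [vertexCount, hj, Nat.card_eq_fintype_card, Fintype.card_subtype]
    have hvert0 := hvs 0 1 (by decide)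
    have hvert1 := hvs 1 0 (by decide)
    -- number of incident edges equals degree = r
    have hinc : ∀ v : V,
        (Finset.univ.filter (fun e : G.edgeSet => v ∈ (e : Sym2 V))).card = r := by
      intro v
      rw [← hreg v, ← G.card_incidenceFinset_eq_degree v]
      refine Finset.card_bij (fun e _ => (e : Sym2 V)) ?_ ?_ ?_
      · intro e he'
        rw [SimpleGraph.mem_incidenceFinset]
        exact ⟨e.2, by simpa using he'⟩
      · intro e₁ _ e₂ _ h
        exact Subtype.ext h
      · intro b hb
        rw [SimpleGraph.mem_incidenceFinset] at hb
        exact ⟨⟨b, hb.1⟩, by simpa using hb.2, rfl⟩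
    -- each label class of edges at v sums to r
    have hZ : ∀ x : ZMod 2, x = 1 ↔ ¬ x = 0 := by decide
    have hdeg : ∀ v : V, labDeg G f 0 v + labDeg G f 1 v = r := by
      intro v
      rw [hlab 0 v, hlab 1 v]
      have h0 : (Finset.univ.filter (fun e : G.edgeSet => f e = 0 ∧ v ∈ (e : Sym2 V)))
          = (Finset.univ.filter (fun e : G.edgeSet => v ∈ (e : Sym2 V))).filter
              (fun e => f e = 0) := by
        rw [Finset.filter_filter]
        apply Finset.filter_congr
        intro e _
        tauto
      have h1 : (Finset.univ.filter (fun e : G.edgeSet => f e = 1 ∧ v ∈ (e : Sym2 V)))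
          = (Finset.univ.filter (fun e : G.edgeSet => v ∈ (e : Sym2 V))).filter
              (fun e => ¬ f e = 0) := by
        rw [Finset.filter_filter]
        apply Finset.filter_congr
        intro e _
        have := hZ (f e)
        tauto
      rw [h0, h1, Finset.card_filter_add_card_filter_not, hinc]
    -- no unlabeled vertex (r odd)
    have hne : ∀ v : V, labDeg G f 0 v ≠ labDeg G f 1 v := by
      intro v hvv
      obtain ⟨s, hs⟩ := hr
      have := hdeg v
      omega
    -- handshake per label
    have hhand : ∀ i : ZMod 2, ∑ v : V, labDeg G f i v = 2 * edgeCount G f i := by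
      intro i
      simp only [hlab, hcount, Finset.card_filter]
      rw [Finset.sum_comm]
      have step : ∀ e : G.edgeSet,
          (∑ v : V, if f e = i ∧ v ∈ (e : Sym2 V) then 1 else 0)
            = if f e = i then 2 else 0 := by
        intro e
        by_cases h : f e = i
        · simp only [h, true_and, if_true]
          rw [← Finset.card_filter]
          obtain ⟨e, hee⟩ := e
          revert hee
          induction e using Sym2.ind with
          | _ a b =>
            intro hee
            intro _
            have hab : a ≠ b := G.ne_of_adj hee
            have hset : Finset.univ.filter (fun v : V => v ∈ s(a, b)) = {a, b} := by
              ext v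
              simp [Sym2.mem_iff]
            rw [hset]
            exact Finset.card_pair hab
        · simp [h]
      rw [Finset.sum_congr rfl (fun e _ => step e)]
      rw [Finset.mul_sum]
      apply Finset.sum_congr rfl
      intro e _
      by_cases h : f e = i <;> simp [h]
    -- total: n * r = 2 * (E0 + E1)
    have htot : n * r = 2 * (edgeCount G f 0 + edgeCount G f 1) := by
      have h2 : ∑ v : V, (labDeg G f 0 v + labDeg G f 1 v) = ∑ v : V, r :=
        Finset.sum_congr rfl (fun v _ => hdeg v)
      rw [Finset.sum_add_distrib, hhand 0, hhand 1, Finset.sum_const,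
        Finset.card_univ, smul_eq_mul] at h2
      linarith
    -- vertex count bound
    have hbound : ∀ i j : ZMod 2, (∀ v : V, labDeg G f j v + labDeg G f i v = r) →
        (r + 1) * (Finset.univ.filter
            (fun v : V => labDeg G f j v < labDeg G f i v)).card
          ≤ 4 * edgeCount G f i := by
      intro i j hij
      have key : ∀ v : V, labDeg G f j v < labDeg G f i v →
          r + 1 ≤ 2 * labDeg G f i v := by
        intro v hv
        have := hij v
        omega
      calc (r + 1) * (Finset.univ.filter
            (fun v : V => labDeg G f j v < labDeg G f i v)).card
          = ∑ _v ∈ Finset.univ.filter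
              (fun v : V => labDeg G f j v < labDeg G f i v), (r + 1) := by
            rw [Finset.sum_const, smul_eq_mul, mul_comm]
        _ ≤ ∑ v ∈ Finset.univ.filter
              (fun v : V => labDeg G f j v < labDeg G f i v),
              2 * labDeg G f i v := by
            apply Finset.sum_le_sum
            intro v hv
            exact key v (Finset.mem_filter.mp hv).2
        _ ≤ ∑ v : V, 2 * labDeg G f i v :=
            Finset.sum_le_sum_of_subset (Finset.filter_subset _ _)
        _ = 4 * edgeCount G f i := by
            rw [← Finset.mul_sum, hhand i]
            ring
    have hbound0 : (r + 1) * vertexCount G f 0 ≤ 4 * edgeCount G f 0 := by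
      rw [hvert0]
      exact hbound 0 1 (fun v => by have := hdeg v; omega)
    have hbound1 : (r + 1) * vertexCount G f 1 ≤ 4 * edgeCount G f 1 := by
      rw [hvert1]
      exact hbound 1 0 (fun v => hdeg v)
    -- v0 + v1 = n
    have hsum : vertexCount G f 0 + vertexCount G f 1 = n := by
      rw [hvert0, hvert1]
      have h1 : (Finset.univ.filter (fun v : V => labDeg G f 0 v < labDeg G f 1 v))
          = (Finset.univ.filter (fun v : V => ¬ labDeg G f 1 v < labDeg G f 0 v)) := by
        apply Finset.filter_congr
        intro v _
        have := hne v
        omega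
      rw [h1, Finset.card_filter_add_card_filter_not, Finset.card_univ]
    -- edge balance
    have hedge : ∀ i : ZMod 2, i = 0 ∨ i = 1 →
        2 * (edgeCount G f i : ℤ) ≤ (edgeCount G f 0 : ℤ) + (edgeCount G f 1 : ℤ) + 1 := by
      rintro i (rfl | rfl) <;>
      · have h2 := hf.2
        rw [abs_le] at h2
        omega
    have ht : (n : ℤ) * (r : ℤ) = 2 * ((edgeCount G f 0 : ℤ) + (edgeCount G f 1 : ℤ)) := by
      exact_mod_cast htot
    -- conclude
    have hb0 : ((r : ℤ) + 1) * (vertexCount G f 0 : ℤ) ≤ (n : ℤ) * r + 2 := by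
      have h1 : ((r : ℤ) + 1) * (vertexCount G f 0 : ℤ) ≤ 4 * (edgeCount G f 0 : ℤ) := by
        exact_mod_cast hbound0
      have h2 := hedge 0 (Or.inl rfl)
      linarith
    have hb1 : ((r : ℤ) + 1) * (vertexCount G f 1 : ℤ) ≤ (n : ℤ) * r + 2 := by
      have h1 : ((r : ℤ) + 1) * (vertexCount G f 1 : ℤ) ≤ 4 * (edgeCount G f 1 : ℤ) := by
        exact_mod_cast hbound1
      have h2 := hedge 1 (Or.inr rfl)
      linarith
    have hsz : (vertexCount G f 0 : ℤ) + (vertexCount G f 1 : ℤ) = (n : ℤ) := by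
      exact_mod_cast hsum
    rcases abs_cases ((vertexCount G f 0 : ℤ) - (vertexCount G f 1 : ℤ)) with ⟨h, _⟩ | ⟨h, _⟩ <;>
      rw [h] <;> nlinarith [hb0, hb1, hsz]
  refine ⟨main, ?_⟩
  rintro k ⟨f, hf, rfl⟩
  have h := main f hf
  have habs : ((ebIndex G f : ℤ)) =
      |(vertexCount G f 0 : ℤ) - (vertexCount G f 1 : ℤ)| := by
    rw [ebIndex, Int.natCast_natAbs]
  rw [habs]
  exact h
end

section
/- Let G be a finite simple graph with at least one edge in which every vertex has odd degree. Then every element of EBI(G) is even; that is, for every edge-friendly labeling f of G, |v_f(0) − v_f(1)| is even. -/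
open SimpleGraph

lemma ebIndex_even_aux {V : Type*} [Fintype V]
    (G : SimpleGraph V)
    (hodd : ∀ v : V, Odd (Nat.card (G.neighborSet v)))
    (f : G.edgeSet → ZMod 2) : Even (ebIndex G f) := by
  classical
  haveI : Fintype G.edgeSet := Fintype.ofFinite _
  -- the number of edges at a vertex labeled 0 plus those labeled 1 is the degree
  have hsplit : ∀ v : V, labDeg G f 0 v + labDeg G f 1 v
      = Nat.card {e : G.edgeSet // v ∈ (e : Sym2 V)} := by
    intro v
    simp only [labDeg, Nat.card_eq_fintype_card, Fintype.card_subtype]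
    rw [← Finset.card_filter_add_card_filter_not
        (s := Finset.univ.filter fun e : G.edgeSet => v ∈ (e : Sym2 V))
        (p := fun e : G.edgeSet => f e = 0)]
    simp only [Finset.filter_filter]
    congr 1
    · apply Finset.card_bij (fun e _ => e) <;> intro e he <;>
        simp_all [and_comm]
    · apply Finset.card_bij (fun e _ => e) <;> intro e he <;>
        · simp only [Finset.mem_filter, Finset.mem_univ, true_and] at *
          revert he
          have h01 : ∀ x : ZMod 2, x = 1 ↔ ¬ x = 0 := by decide
          have := h01 (f e)
          tauto
  have hodd' : ∀ v : V, Odd (Nat.card {e : G.edgeSet // v ∈ (e : Sym2 V)}) := by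
    intro v
    have equiv : {e : G.edgeSet // v ∈ (e : Sym2 V)} ≃ G.incidenceSet v :=
      ⟨fun e => ⟨e.1.1, e.1.2, e.2⟩, fun e => ⟨⟨e.1, e.2.1⟩, e.2.2⟩,
        fun _ => rfl, fun _ => rfl⟩
    rw [Nat.card_congr (equiv.trans (G.incidenceSetEquivNeighborSet v))]
    exact hodd v
  -- no vertex is balanced
  have hne : ∀ v : V, labDeg G f 0 v ≠ labDeg G f 1 v := by
    intro v h
    have h1 := hodd' v
    rw [← hsplit v, h] at h1
    exact (Nat.not_odd_iff_even.mpr ⟨_, rfl⟩) h1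
  -- the two vertex counts partition all vertices
  have hsum : vertexCount G f 0 + vertexCount G f 1 = Fintype.card V := by
    simp only [vertexCount, Nat.card_eq_fintype_card, sub_zero, sub_self,
      Fintype.card_subtype]
    rw [← Finset.card_univ, ← Finset.card_filter_add_card_filter_not
        (s := (Finset.univ : Finset V))
        (p := fun v : V => labDeg G f 1 v < labDeg G f 0 v)]
    congr 1
    apply congrArg Finset.card
    apply Finset.filter_congr
    intro v _
    have h := hne v
    constructor <;> intro <;> omega
  -- the number of vertices is even
  have hcard : Even (Fintype.card V) := by
    have hdeg : ∀ v : V, Odd (G.degree v) := by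
      intro v
      have := hodd v
      rwa [Nat.card_eq_fintype_card, G.card_neighborSet_eq_degree] at this
    have hs := G.sum_degrees_eq_twice_card_edges
    have h0 : ((∑ v, G.degree v : ℕ) : ZMod 2) = 0 := by
      rw [hs]; push_cast
      rw [show (2 : ZMod 2) = 0 by decide, zero_mul]
    rw [Nat.cast_sum] at h0
    have heach : ∀ v : V, ((G.degree v : ℕ) : ZMod 2) = 1 := by
      intro v
      obtain ⟨k, hk⟩ := hdeg v
      rw [hk]; push_cast
      rw [show (2 : ZMod 2) = 0 by decide]; ring
    rw [Finset.sum_congr rfl (fun v _ => heach v), Finset.sum_const,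
      Finset.card_univ, nsmul_eq_mul, mul_one] at h0
    exact even_iff_two_dvd.mpr
      ((ZMod.natCast_eq_zero_iff _ 2).mp h0)
  -- conclude
  have hZ : Even ((vertexCount G f 0 : ℤ) + (vertexCount G f 1 : ℤ)) := by
    have h : ((vertexCount G f 0 + vertexCount G f 1 : ℕ) : ℤ)
        = (Fintype.card V : ℤ) := by exact_mod_cast hsum
    push_cast at h
    rw [h]
    exact (Int.even_coe_nat _).mpr hcard
  have : Even ((vertexCount G f 0 : ℤ) - (vertexCount G f 1 : ℤ)) :=
    Int.even_sub.mpr (Int.even_add.mp hZ)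
  exact Int.natAbs_even.mpr this

theorem EBI_even_of_odd_degrees {V : Type*} [Fintype V]
    (G : SimpleGraph V) (he : G.edgeSet.Nonempty)
    (hodd : ∀ v : V, Odd (Nat.card (G.neighborSet v))) :
    (∀ k ∈ EBI G, Even k) ∧
    ∀ f : G.edgeSet → ZMod 2, EdgeFriendly G f → Even (ebIndex G f) := by
  refine ⟨?_, fun f _ => ebIndex_even_aux G hodd f⟩
  rintro k ⟨f, _, rfl⟩
  exact ebIndex_even_aux G hodd f
end

section
/- For every even integer n ≥ 4, there exists an edge-friendly labeling f of the crown graph K_n × K_2 such that |v_f(0) − v_f(1)| = 2n−4; that is, 2n−4 ∈ EBI(K_n × K_2). -/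
open SimpleGraph

/-- The crown graph `K_n × K_2`: the direct product of the complete graph on `n` vertices
with `K_2`; `(u,a)` is adjacent to `(v,b)` iff `u ≠ v` and `a ≠ b`. -/
def crown (n : ℕ) : SimpleGraph (Fin n × Fin 2) :=
  tensorProd (⊤ : SimpleGraph (Fin n)) (⊤ : SimpleGraph (Fin 2))

/-!
Identify the edge `(u,0)(v,1)` of `K_n × K_2` with the entry `(u,v)` of an off-diagonal
`n × n` matrix `M` over `ZMod 2`; the labels seen by `(u,0)` and by `(v,1)` are then counted by
row `u` and column `v` of `M`. Write `n = m + 1` with `m = 2k + 3`. Fill the row and the column of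
vertex `0` with ones, and on the remaining `m × m` block take the circulant with `M a b = 1` iff
`b - a ∈ {1, …, k} (mod m)`. Both copies of vertex `0` then see only ones, while every other
vertex sees `k + 1` ones against `k + 2` zeros; so `v_f(1) = 2`, `v_f(0) = 2m = 2n - 2`, and each
label occurs on exactly `m(k + 2)` edges.
-/

open Finset

abbrev crownGraph (α : Type*) : SimpleGraph (α × Fin 2) :=
  tensorProd (⊤ : SimpleGraph α) (⊤ : SimpleGraph (Fin 2))

namespace crownGraph

variable {α : Type*}

def edgeOfPair (p : {p : α × α // p.1 ≠ p.2}) : (crownGraph α).edgeSet :=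
  ⟨s((p.1.1, 0), (p.1.2, 1)), p.2, Fin.zero_ne_one⟩

lemma edgeOfPair_bijective : Function.Bijective (edgeOfPair (α := α)) := by
  refine ⟨fun p q h => ?_, fun ⟨e, he⟩ => ?_⟩
  · obtain ⟨h₁, h₂⟩ : p.1.1 = q.1.1 ∧ p.1.2 = q.1.2 := by
      simpa [edgeOfPair] using congrArg Subtype.val h
    exact Subtype.ext (Prod.ext h₁ h₂)
  · induction e using Sym2.ind with
    | _ x y =>
      obtain ⟨hxy, hc⟩ : x.1 ≠ y.1 ∧ x.2 ≠ y.2 := he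
      obtain ⟨a, i⟩ := x
      obtain ⟨b, j⟩ := y
      fin_cases i <;> fin_cases j
      · exact absurd rfl hc
      · exact ⟨⟨(a, b), hxy⟩, rfl⟩
      · exact ⟨⟨(b, a), hxy.symm⟩, Subtype.ext Sym2.eq_swap⟩
      · exact absurd rfl hc

noncomputable def edgeEquiv : {p : α × α // p.1 ≠ p.2} ≃ (crownGraph α).edgeSet :=
  .ofBijective _ edgeOfPair_bijective

noncomputable def matrixLabeling (M : α → α → ZMod 2) (e : (crownGraph α).edgeSet) : ZMod 2 :=
  M (edgeEquiv.symm e).1.1 (edgeEquiv.symm e).1.2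

lemma matrixLabeling_edgeOfPair (M : α → α → ZMod 2) (p : {p : α × α // p.1 ≠ p.2}) :
    matrixLabeling M (edgeOfPair p) = M p.1.1 p.1.2 := by
  simp [matrixLabeling, edgeEquiv, Equiv.ofBijective_symm_apply_apply]

lemma mem_edgeOfPair_zero {p : {p : α × α // p.1 ≠ p.2}} {u : α} :
    (u, 0) ∈ (edgeOfPair p : Sym2 (α × Fin 2)) ↔ p.1.1 = u := by
  simp [edgeOfPair, eq_comm]

lemma mem_edgeOfPair_one {p : {p : α × α // p.1 ≠ p.2}} {v : α} :
    (v, 1) ∈ (edgeOfPair p : Sym2 (α × Fin 2)) ↔ p.1.2 = v := by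
  simp [edgeOfPair, eq_comm]

lemma natCard_edges (P : (crownGraph α).edgeSet → Prop) :
    Nat.card {e // P e} = Nat.card {p : α × α // ∃ h : p.1 ≠ p.2, P (edgeOfPair ⟨p, h⟩)} :=
  Nat.card_congr ((edgeEquiv.subtypeEquiv fun _ => Iff.rfl).symm.trans
    (Equiv.subtypeSubtypeEquivSubtypeExists _ _))

variable [Fintype α] [DecidableEq α]

def rowCount (M : α → α → ZMod 2) (i : ZMod 2) (u : α) : ℕ := #{v | v ≠ u ∧ M u v = i}

def colCount (M : α → α → ZMod 2) (i : ZMod 2) (v : α) : ℕ := #{u | u ≠ v ∧ M u v = i}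

lemma edgeCount_matrixLabeling (M : α → α → ZMod 2) (i : ZMod 2) :
    edgeCount (crownGraph α) (matrixLabeling M) i = ∑ u, rowCount M i u := by
  rw [edgeCount, natCard_edges]
  simp only [matrixLabeling_edgeOfPair, exists_prop]
  rw [Nat.card_eq_fintype_card, Fintype.card_subtype, card_filter, Fintype.sum_prod_type]
  simp only [rowCount, card_filter, ne_comm]

lemma labDeg_matrixLabeling_zero (M : α → α → ZMod 2) (i : ZMod 2) (u : α) :
    labDeg (crownGraph α) (matrixLabeling M) i (u, 0) = rowCount M i u := by
  rw [labDeg, natCard_edges]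
  simp only [matrixLabeling_edgeOfPair, mem_edgeOfPair_zero, exists_prop]
  rw [Nat.card_eq_fintype_card, Fintype.card_subtype, card_filter, Fintype.sum_prod_type,
    sum_eq_single u (fun a _ ha => by simp [ha]) (by simp), rowCount, card_filter]
  simp [ne_comm]

lemma labDeg_matrixLabeling_one (M : α → α → ZMod 2) (i : ZMod 2) (v : α) :
    labDeg (crownGraph α) (matrixLabeling M) i (v, 1) = colCount M i v := by
  rw [labDeg, natCard_edges]
  simp only [matrixLabeling_edgeOfPair, mem_edgeOfPair_one, exists_prop]
  rw [Nat.card_eq_fintype_card, Fintype.card_subtype, card_filter, Fintype.sum_prod_type, sum_comm,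
    sum_eq_single v (fun a _ ha => by simp [ha]) (by simp), colCount, card_filter]
  simp

lemma rowCount_zero_add_rowCount_one (M : α → α → ZMod 2) (u : α) :
    rowCount M 0 u + rowCount M 1 u = Fintype.card α - 1 := by
  have h := card_filter_add_card_filter_not (s := univ.erase u) (fun v => M u v = 0)
  simp only [filter_erase, card_erase_of_mem (mem_univ u), card_univ] at h
  rw [← h, rowCount, rowCount]
  have h01 : ∀ x : ZMod 2, x = 1 ↔ x ≠ 0 := by decide
  congr 2 <;> ext v <;> simp [h01]

lemma colCount_zero_add_colCount_one (M : α → α → ZMod 2) (v : α) :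
    colCount M 0 v + colCount M 1 v = Fintype.card α - 1 :=
  rowCount_zero_add_rowCount_one (fun a b => M b a) v

lemma vertexCount_matrixLabeling {M : α → α → ZMod 2}
    (hM : ∀ i u, colCount M i u = rowCount M i u) (i : ZMod 2) :
    vertexCount (crownGraph α) (matrixLabeling M) i
      = 2 * #{u | rowCount M (1 - i) u < rowCount M i u} := by
  have labDeg_eq : ∀ j (x : α × Fin 2),
      labDeg (crownGraph α) (matrixLabeling M) j x = rowCount M j x.1 := by
    rintro j ⟨u, c⟩
    fin_cases c
    · exact labDeg_matrixLabeling_zero M j u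
    · exact (labDeg_matrixLabeling_one M j u).trans (hM j u)
  simp only [vertexCount, labDeg_eq]
  rw [Nat.card_congr (Equiv.prodSubtypeFstEquivSubtypeProd
      (p := fun u => rowCount M (1 - i) u < rowCount M i u)),
    Nat.card_prod, Nat.card_eq_fintype_card, Fintype.card_subtype, Nat.card_eq_fintype_card,
    Fintype.card_fin, mul_comm]

end crownGraph

lemma surjective_of_edgeCount_pos {V : Type*} {G : SimpleGraph V} {f : G.edgeSet → ZMod 2}
    (h : ∀ i, 0 < edgeCount G f i) : Function.Surjective f := fun i =>
  have ⟨⟨e, he⟩⟩ := (Nat.card_pos_iff.mp (h i)).1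
  ⟨e, he⟩

lemma Fin.card_filter_val_mem_Icc {m k : ℕ} (hk : k < m) : #{d : Fin m | d.val ∈ Icc 1 k} = k := by
  rw [← card_map Fin.valEmbedding]
  convert Nat.card_Icc 1 k using 2
  · ext x
    simp only [mem_map, mem_filter, mem_univ, true_and, Fin.valEmbedding_apply]
    exact ⟨by rintro ⟨a, h, rfl⟩; exact h, fun h => ⟨⟨x, by grind⟩, h, rfl⟩⟩
  · simp

open crownGraph

def circulant {m : ℕ} (k : ℕ) (a b : Fin m) : ZMod 2 := if (b - a).val ∈ Icc 1 k then 1 else 0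

lemma rowCount_circulant_one {m k : ℕ} (hk : k < m) (a : Fin m) :
    rowCount (circulant k) 1 a = k := by
  have : NeZero m := ⟨by omega⟩
  refine (card_equiv (Equiv.subRight a) fun b => ?_).trans (Fin.card_filter_val_mem_Icc hk)
  simp only [circulant, mem_filter, mem_univ, true_and, ite_eq_left_iff, zero_ne_one,
    imp_false, not_not, Equiv.subRight_apply]
  exact and_iff_right_of_imp fun h hba => by simp [hba] at h

lemma colCount_circulant_one {m k : ℕ} (hk : k < m) (b : Fin m) :
    colCount (circulant k) 1 b = k := by
  have : NeZero m := ⟨by omega⟩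
  refine (card_equiv (Equiv.subLeft b) fun a => ?_).trans (Fin.card_filter_val_mem_Icc hk)
  simp only [circulant, mem_filter, mem_univ, true_and, ite_eq_left_iff, zero_ne_one,
    imp_false, not_not, Equiv.subLeft_apply]
  exact and_iff_right_of_imp fun h hab => by simp [hab] at h

def crownMatrix {m : ℕ} (k : ℕ) : Fin (m + 1) → Fin (m + 1) → ZMod 2 :=
  Fin.cases (fun _ => 1) fun a => Fin.cases 1 (circulant k a)

lemma rowCount_crownMatrix_one_zero {m : ℕ} (k : ℕ) : rowCount (crownMatrix (m := m) k) 1 0 = m := by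
  simp [rowCount, crownMatrix, filter_ne']

lemma colCount_crownMatrix_one_zero {m : ℕ} (k : ℕ) : colCount (crownMatrix (m := m) k) 1 0 = m := by
  rw [colCount, card_filter, Fin.sum_univ_succ]
  simp [crownMatrix, Fin.succ_ne_zero]

lemma rowCount_crownMatrix_one_succ {m k : ℕ} (hk : k < m) (a : Fin m) :
    rowCount (crownMatrix k) 1 a.succ = k + 1 := by
  rw [rowCount, card_filter, Fin.sum_univ_succ]
  simp only [crownMatrix, Fin.cases_zero, Fin.cases_succ, Fin.succ_inj, ne_eq,
    (Fin.succ_ne_zero a).symm, not_false_eq_true, and_self, ↓reduceIte, sum_boole, Nat.cast_id]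
  rw [add_comm]
  exact congrArg (· + 1) (rowCount_circulant_one hk a)

lemma colCount_crownMatrix_one_succ {m k : ℕ} (hk : k < m) (b : Fin m) :
    colCount (crownMatrix k) 1 b.succ = k + 1 := by
  rw [colCount, card_filter, Fin.sum_univ_succ]
  simp only [crownMatrix, Fin.cases_zero, Fin.cases_succ, Fin.succ_inj, ne_eq,
    (Fin.succ_ne_zero b).symm, not_false_eq_true, and_self, ↓reduceIte, sum_boole, Nat.cast_id]
  rw [add_comm]
  exact congrArg (· + 1) (colCount_circulant_one hk b)

lemma rowCount_crownMatrix_zero_zero {m : ℕ} (k : ℕ) : rowCount (crownMatrix (m := m) k) 0 0 = 0 := by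
  have h := rowCount_zero_add_rowCount_one (crownMatrix (m := m) k) 0
  rw [rowCount_crownMatrix_one_zero, Fintype.card_fin] at h
  omega

lemma rowCount_crownMatrix_zero_succ {m k : ℕ} (hm : m = 2 * k + 3) (a : Fin m) :
    rowCount (crownMatrix k) 0 a.succ = k + 2 := by
  have h := rowCount_zero_add_rowCount_one (crownMatrix k) a.succ
  rw [rowCount_crownMatrix_one_succ (by omega), Fintype.card_fin] at h
  omega

lemma colCount_crownMatrix {m k : ℕ} (hk : k < m) (i : ZMod 2) (u : Fin (m + 1)) :
    colCount (crownMatrix k) i u = rowCount (crownMatrix k) i u := by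
  have h₁ : colCount (crownMatrix k) 1 u = rowCount (crownMatrix k) 1 u := by
    cases u using Fin.cases with
    | zero => rw [colCount_crownMatrix_one_zero, rowCount_crownMatrix_one_zero]
    | succ a => rw [colCount_crownMatrix_one_succ hk, rowCount_crownMatrix_one_succ hk]
  have hr := rowCount_zero_add_rowCount_one (crownMatrix k) u
  have hc := colCount_zero_add_colCount_one (crownMatrix k) u
  obtain rfl | rfl : i = 0 ∨ i = 1 := by revert i; decide
  · omega
  · exact h₁

lemma rowCount_crownMatrix_zero_lt_one_iff {m k : ℕ} (hm : m = 2 * k + 3) (u : Fin (m + 1)) :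
    rowCount (crownMatrix k) 0 u < rowCount (crownMatrix k) 1 u ↔ u = 0 := by
  cases u using Fin.cases with
  | zero => simp [rowCount_crownMatrix_zero_zero, rowCount_crownMatrix_one_zero, hm]
  | succ a =>
    simp [rowCount_crownMatrix_zero_succ hm, rowCount_crownMatrix_one_succ (show k < m by omega),
      Fin.succ_ne_zero]

lemma rowCount_crownMatrix_one_lt_zero_iff {m k : ℕ} (hm : m = 2 * k + 3) (u : Fin (m + 1)) :
    rowCount (crownMatrix k) 1 u < rowCount (crownMatrix k) 0 u ↔ u ≠ 0 := by
  cases u using Fin.cases with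
  | zero => simp [rowCount_crownMatrix_zero_zero]
  | succ a =>
    simp [rowCount_crownMatrix_zero_succ hm, rowCount_crownMatrix_one_succ (show k < m by omega),
      Fin.succ_ne_zero]

lemma vertexCount_crownMatrix_zero {m k : ℕ} (hm : m = 2 * k + 3) :
    vertexCount (crownGraph (Fin (m + 1))) (matrixLabeling (crownMatrix k)) 0 = 2 * m := by
  rw [vertexCount_matrixLabeling (colCount_crownMatrix (by omega)), sub_zero]
  simp [rowCount_crownMatrix_one_lt_zero_iff hm, filter_ne']

lemma vertexCount_crownMatrix_one {m k : ℕ} (hm : m = 2 * k + 3) :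
    vertexCount (crownGraph (Fin (m + 1))) (matrixLabeling (crownMatrix k)) 1 = 2 := by
  rw [vertexCount_matrixLabeling (colCount_crownMatrix (by omega)), sub_self]
  simp [rowCount_crownMatrix_zero_lt_one_iff hm, filter_eq']

lemma edgeCount_crownMatrix {m k : ℕ} (hm : m = 2 * k + 3) (i : ZMod 2) :
    edgeCount (crownGraph (Fin (m + 1))) (matrixLabeling (crownMatrix k)) i = m * (k + 2) := by
  rw [edgeCount_matrixLabeling, Fin.sum_univ_succ]
  obtain rfl | rfl : i = 0 ∨ i = 1 := by revert i; decide
  · simp [rowCount_crownMatrix_zero_zero, rowCount_crownMatrix_zero_succ hm]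
  · simp only [rowCount_crownMatrix_one_zero, rowCount_crownMatrix_one_succ (show k < m by omega),
      sum_const, card_univ, Fintype.card_fin, smul_eq_mul]
    ring

lemma edgeFriendly_crownMatrix {m k : ℕ} (hm : m = 2 * k + 3) :
    EdgeFriendly (crownGraph (Fin (m + 1))) (matrixLabeling (crownMatrix k)) := by
  refine ⟨surjective_of_edgeCount_pos fun i => ?_, ?_⟩
  · rw [edgeCount_crownMatrix hm, hm]
    positivity
  · simp [edgeCount_crownMatrix hm]

theorem crown_even_max_attained (n : ℕ) (heven : Even n) (hn : 4 ≤ n) :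
    2 * n - 4 ∈ EBI (crown n) := by
  obtain ⟨k, rfl⟩ : ∃ k, n = 2 * k + 3 + 1 := by
    obtain ⟨r, hr⟩ := heven
    exact ⟨r - 2, by omega⟩
  refine ⟨matrixLabeling (crownMatrix k), edgeFriendly_crownMatrix rfl, ?_⟩
  change ebIndex (crownGraph _) _ = _
  rw [ebIndex, vertexCount_crownMatrix_zero rfl, vertexCount_crownMatrix_one rfl]
  omega
end

section
/- For every odd integer n ≥ 5, there exists an edge-friendly labeling f of the crown graph K_n × K_2 such that |v_f(0) − v_f(1)| = 2n−8; that is, 2n−8 ∈ EBI(K_n × K_2). -/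
open SimpleGraph

/-!
Label the edge `(u, 0) — (v, 1)` of `K_n × K_2` by the entry `b u v` of an `n × n` matrix whose
diagonal is ignored, so that vertex `(u, 0)` sees row `u` and vertex `(v, 1)` sees column `v`.
For `n = m + 2` with `m ≥ 5` odd, take on the first `m` indices the circulant matrix with zeros
exactly where `v - u` lies in a set `T ⊆ ℤ/m ∖ {0}` of size `(m + 3) / 2`, and make the last two
rows and columns all ones except for one zero in a last row. Every row and column of the circulant
part then has a majority of zeros and the four others a majority of ones, while exactly half of
the `n (n - 1)` entries are zeros; so `|v_f(0) - v_f(1)| = 2m - 4 = 2n - 8`. For `n = 5` the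
circulant part has no room for enough zeros, and an explicit `5 × 5` matrix does the job.
-/

open Finset

lemma card_filter_prod_fst_eq {α : Type*} [Fintype α] [DecidableEq α] (Q : α → α → Prop)
    [DecidableRel Q] (u : α) : #{p : α × α | Q p.1 p.2 ∧ p.1 = u} = #{v | Q u v} :=
  card_nbij' Prod.snd (Prod.mk u) (fun _ => by simp +contextual [eq_comm])
    (fun _ => by simp) (fun _ => by simp +contextual [eq_comm]) (fun _ _ => rfl)

lemma card_filter_prod_snd_eq {α : Type*} [Fintype α] [DecidableEq α] (Q : α → α → Prop)
    [DecidableRel Q] (w : α) : #{p : α × α | Q p.1 p.2 ∧ p.2 = w} = #{u | Q u w} :=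
  card_nbij' Prod.fst (Prod.mk · w) (fun _ => by simp +contextual [eq_comm])
    (fun _ => by simp) (fun _ => by simp +contextual [eq_comm]) (fun _ _ => rfl)

lemma card_filter_sub_right_mem {G : Type*} [AddGroup G] [Fintype G] [DecidableEq G]
    (T : Finset G) (u : G) : #{v | v - u ∈ T} = #T :=
  card_equiv (Equiv.subRight u) (by simp)

lemma card_filter_sub_left_mem {G : Type*} [AddGroup G] [Fintype G] [DecidableEq G]
    (T : Finset G) (w : G) : #{u | w - u ∈ T} = #T :=
  card_equiv (Equiv.subLeft w) (by simp)

lemma Fin.castAdd_ne_natAdd {a c : ℕ} (i : Fin a) (j : Fin c) :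
    Fin.castAdd c i ≠ Fin.natAdd a j := by
  simp only [ne_eq, Fin.ext_iff, Fin.val_castAdd, Fin.val_natAdd]
  omega

lemma card_filter_fin_add {a c : ℕ} (P : Fin (a + c) → Prop) [DecidablePred P] :
    #{v | P v} = #{i | P (Fin.castAdd c i)} + #{j | P (Fin.natAdd a j)} := by
  simp only [card_filter, Fin.sum_univ_add]

lemma card_filter_fin_add_of_left {a c : ℕ} {P : Fin (a + c) → Prop} [DecidablePred P]
    (hl : ∀ i, P (Fin.castAdd c i)) (hr : ∀ j, ¬P (Fin.natAdd a j)) : #{v | P v} = a := by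
  simp [card_filter_fin_add, hl, hr]

lemma card_filter_fin_add_of_right {a c : ℕ} {P : Fin (a + c) → Prop} [DecidablePred P]
    (hl : ∀ i, ¬P (Fin.castAdd c i)) (hr : ∀ j, P (Fin.natAdd a j)) : #{v | P v} = c := by
  simp [card_filter_fin_add, hl, hr]

section CrownLabeling

variable {n : ℕ}

lemma crown_adj {x y : Fin n × Fin 2} : (crown n).Adj x y ↔ x.1 ≠ y.1 ∧ x.2 ≠ y.2 := Iff.rfl

def crownEdge (p : {p : Fin n × Fin n // p.1 ≠ p.2}) : (crown n).edgeSet :=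
  ⟨s((p.1.1, 0), (p.1.2, 1)), crown_adj.2 ⟨p.2, zero_ne_one⟩⟩

lemma crownEdge_bijective : Function.Bijective (crownEdge (n := n)) := by
  refine ⟨fun p q h => ?_, fun ⟨e, he⟩ => ?_⟩
  · have hpq := congrArg Subtype.val h
    simp only [crownEdge, Sym2.eq, Sym2.rel_iff', Prod.mk.injEq, Prod.swap_prod_mk, zero_ne_one,
      one_ne_zero, and_true, and_false, and_self, or_false] at hpq
    exact Subtype.ext (Prod.ext hpq.1 hpq.2)
  · induction e using Sym2.ind with
    | _ x y =>
      obtain ⟨hne, hside⟩ := crown_adj.1 he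
      obtain ⟨a, i⟩ := x
      obtain ⟨c, j⟩ := y
      fin_cases i <;> fin_cases j
      · exact absurd rfl hside
      · exact ⟨⟨(a, c), hne⟩, rfl⟩
      · exact ⟨⟨(c, a), hne.symm⟩, Subtype.ext Sym2.eq_swap⟩
      · exact absurd rfl hside

noncomputable def crownEdgeEquiv : {p : Fin n × Fin n // p.1 ≠ p.2} ≃ (crown n).edgeSet :=
  Equiv.ofBijective _ crownEdge_bijective

lemma mem_crownEdgeEquiv_left (p : {p : Fin n × Fin n // p.1 ≠ p.2}) (u : Fin n) :
    (u, 0) ∈ ((crownEdgeEquiv p : (crown n).edgeSet) : Sym2 (Fin n × Fin 2)) ↔ p.1.1 = u := by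
  simp [crownEdgeEquiv, crownEdge, eq_comm]

lemma mem_crownEdgeEquiv_right (p : {p : Fin n × Fin n // p.1 ≠ p.2}) (w : Fin n) :
    (w, 1) ∈ ((crownEdgeEquiv p : (crown n).edgeSet) : Sym2 (Fin n × Fin 2)) ↔ p.1.2 = w := by
  simp [crownEdgeEquiv, crownEdge, eq_comm]

lemma card_crown_edges (S : Fin n → Fin n → Prop) [DecidableRel S] :
    Nat.card {e : (crown n).edgeSet // S (crownEdgeEquiv.symm e).1.1 (crownEdgeEquiv.symm e).1.2}
      = #{p : Fin n × Fin n | p.1 ≠ p.2 ∧ S p.1 p.2} := by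
  rw [← Fintype.card_subtype, ← Nat.card_eq_fintype_card]
  exact Nat.card_congr <|
    (crownEdgeEquiv.symm.subtypeEquiv (q := fun p => S p.1.1 p.1.2) fun _ => Iff.rfl).trans
      (Equiv.subtypeSubtypeEquivSubtypeInter (fun p : Fin n × Fin n => p.1 ≠ p.2) fun p => S p.1 p.2)

noncomputable def crownLabeling (b : Fin n → Fin n → ZMod 2) (e : (crown n).edgeSet) : ZMod 2 :=
  b (crownEdgeEquiv.symm e).1.1 (crownEdgeEquiv.symm e).1.2

lemma crownLabeling_crownEdgeEquiv (b : Fin n → Fin n → ZMod 2)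
    (p : {p : Fin n × Fin n // p.1 ≠ p.2}) : crownLabeling b (crownEdgeEquiv p) = b p.1.1 p.1.2 := by
  simp [crownLabeling]

def rowCount (b : Fin n → Fin n → ZMod 2) (i : ZMod 2) (u : Fin n) : ℕ := #{v | u ≠ v ∧ b u v = i}

def majorityCount (b : Fin n → Fin n → ZMod 2) (i : ZMod 2) : ℕ :=
  #{u | rowCount b (1 - i) u < rowCount b i u}

lemma rowCount_zero_add_rowCount_one (b : Fin n → Fin n → ZMod 2) (u : Fin n) :
    rowCount b 0 u + rowCount b 1 u = n - 1 := by
  have h : ∀ x : ZMod 2, x ≠ 0 ↔ x = 1 := by decide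
  rw [rowCount, rowCount, ← filter_filter, ← filter_filter]
  simp_rw [← h]
  rw [card_filter_add_card_filter_not, filter_ne, card_erase_of_mem (mem_univ u), card_univ,
    Fintype.card_fin]

lemma sum_rowCount_zero_add_sum_rowCount_one (b : Fin n → Fin n → ZMod 2) :
    ∑ u, rowCount b 0 u + ∑ u, rowCount b 1 u = n * (n - 1) := by
  simp [← sum_add_distrib, rowCount_zero_add_rowCount_one]

lemma majorityCount_zero (b : Fin n → Fin n → ZMod 2) :
    majorityCount b 0 = #{u | n - 1 < 2 * rowCount b 0 u} := by
  refine congrArg card (filter_congr fun u _ => ?_)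
  have := rowCount_zero_add_rowCount_one b u
  rw [sub_zero]
  omega

lemma majorityCount_one (b : Fin n → Fin n → ZMod 2) :
    majorityCount b 1 = #{u | 2 * rowCount b 0 u < n - 1} := by
  refine congrArg card (filter_congr fun u _ => ?_)
  have := rowCount_zero_add_rowCount_one b u
  rw [sub_self]
  omega

lemma edgeCount_crownLabeling (b : Fin n → Fin n → ZMod 2) (i : ZMod 2) :
    edgeCount (crown n) (crownLabeling b) i = ∑ u, rowCount b i u := by
  refine (card_crown_edges (fun a c => b a c = i)).trans ?_
  simp only [rowCount, card_filter, Fintype.sum_prod_type]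

lemma labDeg_crownLabeling_left (b : Fin n → Fin n → ZMod 2) (i : ZMod 2) (u : Fin n) :
    labDeg (crown n) (crownLabeling b) i (u, 0) = rowCount b i u := by
  have hmem (e : (crown n).edgeSet) :
      (u, 0) ∈ (e : Sym2 (Fin n × Fin 2)) ↔ (crownEdgeEquiv.symm e).1.1 = u := by
    rw [← mem_crownEdgeEquiv_left, Equiv.apply_symm_apply]
  rw [labDeg, Nat.card_congr (Equiv.subtypeEquivRight fun e => and_congr_right' (hmem e)),
    rowCount, ← card_filter_prod_fst_eq (fun a c => a ≠ c ∧ b a c = i) u]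
  refine (card_crown_edges (fun a c => b a c = i ∧ a = u)).trans ?_
  simp_rw [and_assoc]

lemma labDeg_crownLabeling_right (b : Fin n → Fin n → ZMod 2) (i : ZMod 2) (w : Fin n) :
    labDeg (crown n) (crownLabeling b) i (w, 1) = rowCount (flip b) i w := by
  have hmem (e : (crown n).edgeSet) :
      (w, 1) ∈ (e : Sym2 (Fin n × Fin 2)) ↔ (crownEdgeEquiv.symm e).1.2 = w := by
    rw [← mem_crownEdgeEquiv_right, Equiv.apply_symm_apply]
  rw [labDeg, Nat.card_congr (Equiv.subtypeEquivRight fun e => and_congr_right' (hmem e)),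
    rowCount]
  refine (card_crown_edges (fun a c => b a c = i ∧ c = w)).trans ?_
  simp_rw [← and_assoc, card_filter_prod_snd_eq (fun a c => a ≠ c ∧ b a c = i) w, flip, ne_comm]
  rfl

lemma vertexCount_crownLabeling (b : Fin n → Fin n → ZMod 2) (i : ZMod 2) :
    vertexCount (crown n) (crownLabeling b) i = majorityCount b i + majorityCount (flip b) i := by
  rw [vertexCount, Nat.card_eq_fintype_card, Fintype.card_subtype, card_filter,
    Fintype.sum_prod_type]
  simp only [Fin.sum_univ_two, labDeg_crownLabeling_left, labDeg_crownLabeling_right,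
    sum_add_distrib, majorityCount, card_filter]

lemma mem_EBI_crown {b : Fin n → Fin n → ZMod 2} {p q : ℕ}
    (hsurj : ∀ i, ∃ u v, u ≠ v ∧ b u v = i)
    (hbal : ∑ u, rowCount b 0 u = ∑ u, rowCount b 1 u)
    (hp : majorityCount b 0 + majorityCount (flip b) 0 = p)
    (hq : majorityCount b 1 + majorityCount (flip b) 1 = q) :
    ((p : ℤ) - q).natAbs ∈ EBI (crown n) := by
  refine ⟨crownLabeling b, ⟨fun i => ?_, ?_⟩, ?_⟩
  · obtain ⟨u, v, huv, hi⟩ := hsurj i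
    exact ⟨crownEdgeEquiv ⟨(u, v), huv⟩, by rw [crownLabeling_crownEdgeEquiv, hi]⟩
  · simp [edgeCount_crownLabeling, hbal]
  · rw [ebIndex, vertexCount_crownLabeling, vertexCount_crownLabeling, hp, hq]

end CrownLabeling

lemma crown_five_mem_EBI : 2 ∈ EBI (crown 5) := by
  simpa using mem_EBI_crown (b := fun u v => if u ≤ 1 ∨ v = 3 then 0 else 1) (p := 3) (q := 5)
    (by decide) (by decide) (by decide) (by decide)

section CirculantPattern

variable {m : ℕ} [NeZero m] {T : Finset (Fin m)}

def circulantPattern (T : Finset (Fin m)) : Fin (m + 2) → Fin (m + 2) → ZMod 2 :=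
  Fin.addCases
    (fun u => Fin.addCases (fun v => if v - u ∈ T then 0 else 1) fun _ => 1)
    (fun j => Fin.addCases (fun v => if j = 0 ∧ v = 0 then 0 else 1) fun _ => 1)

lemma exists_circulantPattern_eq (i : ZMod 2) :
    ∃ u v, u ≠ v ∧ circulantPattern T u v = i := by
  obtain rfl | rfl : i = 0 ∨ i = 1 := by revert i; decide
  · exact ⟨Fin.natAdd m 0, Fin.castAdd 2 0, (Fin.castAdd_ne_natAdd _ _).symm, by
      simp [circulantPattern]⟩
  · exact ⟨Fin.natAdd m 1, Fin.castAdd 2 0, (Fin.castAdd_ne_natAdd _ _).symm, by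
      simp [circulantPattern]⟩

lemma rowCount_circulantPattern_castAdd (hT : 0 ∉ T) (u : Fin m) :
    rowCount (circulantPattern T) 0 (Fin.castAdd 2 u) = #T := by
  rw [rowCount, card_filter_fin_add, ← card_filter_sub_right_mem T u]
  simp only [circulantPattern, Fin.addCases_left, Fin.addCases_right, ne_eq, Fin.castAdd_inj,
    ite_eq_left_iff, one_ne_zero, imp_false, not_not, and_false, filter_false, card_empty,
    add_zero]
  exact congrArg card <| filter_congr fun v _ =>
    and_iff_right_of_imp fun hv huv => hT (by rwa [huv, sub_self] at hv)

lemma rowCount_circulantPattern_natAdd (j : Fin 2) :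
    rowCount (circulantPattern T) 0 (Fin.natAdd m j) = if j = 0 then 1 else 0 := by
  rw [rowCount, card_filter_fin_add]
  by_cases hj : j = 0 <;>
    simp [circulantPattern, (Fin.castAdd_ne_natAdd _ _).symm, hj, filter_eq']

lemma rowCount_flip_circulantPattern_castAdd (hT : 0 ∉ T) (w : Fin m) :
    rowCount (flip (circulantPattern T)) 0 (Fin.castAdd 2 w) = #T + if w = 0 then 1 else 0 := by
  rw [rowCount, card_filter_fin_add, ← card_filter_sub_left_mem T w]
  have hdiag : #{u | w ≠ u ∧ w - u ∈ T} = #{u | w - u ∈ T} := congrArg card <| filter_congr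
    fun u _ => and_iff_right_of_imp fun hu hwu => hT (by rwa [hwu, sub_self] at hu)
  simp only [circulantPattern, flip, Fin.addCases_left, Fin.addCases_right, ne_eq, Fin.castAdd_inj,
    ite_eq_left_iff, one_ne_zero, imp_false, not_not, Fin.castAdd_ne_natAdd, not_false_eq_true,
    true_and] at hdiag ⊢
  rw [hdiag]
  by_cases hw : w = 0 <;> simp [hw, filter_eq']

lemma rowCount_flip_circulantPattern_natAdd (j : Fin 2) :
    rowCount (flip (circulantPattern T)) 0 (Fin.natAdd m j) = 0 := by
  rw [rowCount, card_filter_fin_add]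
  simp [circulantPattern, flip]

lemma sum_rowCount_circulantPattern (hT : 0 ∉ T) :
    ∑ u, rowCount (circulantPattern T) 0 u = m * #T + 1 := by
  simp [Fin.sum_univ_add, rowCount_circulantPattern_castAdd hT, rowCount_circulantPattern_natAdd]

lemma majorityCount_add_circulantPattern_zero (hT0 : 0 ∉ T) (hT : 2 * #T = m + 3) :
    majorityCount (circulantPattern T) 0 + majorityCount (flip (circulantPattern T)) 0 = 2 * m := by
  rw [majorityCount_zero, majorityCount_zero,
    card_filter_fin_add_of_left (fun i => ?row) (fun j => ?rowBad),
    card_filter_fin_add_of_left (fun i => ?col) (fun j => ?colBad), two_mul]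
  case row => rw [rowCount_circulantPattern_castAdd hT0]; omega
  case rowBad => rw [rowCount_circulantPattern_natAdd]; split_ifs <;> omega
  case col => rw [rowCount_flip_circulantPattern_castAdd hT0]; omega
  case colBad => rw [rowCount_flip_circulantPattern_natAdd]; omega

lemma majorityCount_add_circulantPattern_one (hT0 : 0 ∉ T) (hT : 2 * #T = m + 3) :
    majorityCount (circulantPattern T) 1 + majorityCount (flip (circulantPattern T)) 1 = 4 := by
  have hm : #T ≤ m := card_le_univ T |>.trans_eq (Fintype.card_fin m)
  rw [majorityCount_one, majorityCount_one,
    card_filter_fin_add_of_right (fun i => ?row) (fun j => ?rowBad),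
    card_filter_fin_add_of_right (fun i => ?col) (fun j => ?colBad)]
  case row => rw [rowCount_circulantPattern_castAdd hT0]; omega
  case rowBad => rw [rowCount_circulantPattern_natAdd]; split_ifs <;> omega
  case col => rw [rowCount_flip_circulantPattern_castAdd hT0]; split_ifs <;> omega
  case colBad => rw [rowCount_flip_circulantPattern_natAdd]; omega

end CirculantPattern

lemma mem_EBI_crown_add_two {m : ℕ} (hodd : Odd m) (hm : 5 ≤ m) :
    2 * m - 4 ∈ EBI (crown (m + 2)) := by
  have : NeZero m := ⟨by omega⟩
  obtain ⟨T, hT0, hT⟩ : ∃ T ⊆ univ.erase (0 : Fin m), #T = (m + 3) / 2 := exists_subset_card_eq <| by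
    rw [card_erase_of_mem (mem_univ 0), card_univ, Fintype.card_fin]; omega
  replace hT0 : 0 ∉ T := fun h => (mem_erase.1 (hT0 h)).1 rfl
  replace hT : 2 * #T = m + 3 := by obtain ⟨k, rfl⟩ := hodd; omega
  have hbal : ∑ u, rowCount (circulantPattern T) 0 u = ∑ u, rowCount (circulantPattern T) 1 u := by
    have hsum := sum_rowCount_zero_add_sum_rowCount_one (circulantPattern T)
    have hhalf : (m + 2) * (m + 2 - 1) = 2 * (m * #T + 1) := by
      rw [show m + 2 - 1 = m + 1 by omega]
      nlinarith [hT]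
    rw [sum_rowCount_circulantPattern hT0] at hsum ⊢
    omega
  have h := mem_EBI_crown exists_circulantPattern_eq hbal
    (majorityCount_add_circulantPattern_zero hT0 hT) (majorityCount_add_circulantPattern_one hT0 hT)
  rwa [show ((2 * m : ℕ) - (4 : ℕ) : ℤ).natAbs = 2 * m - 4 by omega] at h

theorem crown_odd_max_attained (n : ℕ) (hodd : Odd n) (hn : 5 ≤ n) :
    2 * n - 8 ∈ EBI (crown n) := by
  obtain ⟨m, rfl⟩ : ∃ m, n = m + 2 := ⟨n - 2, by omega⟩
  have hm : Odd m := by simpa [Nat.odd_add] using hodd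
  obtain rfl | hm5 : m = 3 ∨ 5 ≤ m := by obtain ⟨k, rfl⟩ := hm; omega
  · exact crown_five_mem_EBI
  · rw [show 2 * (m + 2) - 8 = 2 * m - 4 by omega]
    exact mem_EBI_crown_add_two hm hm5
end
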